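/- arXiv:1211.2576 — 4 statements merged into one kernel-verified Lean document; each statement's English description precedes it below -/
import Mathlib

section
/- Let φ be a faithful normal state on a factor M acting standardly on L²(M,φ), and let θ be an equi-modular endomorphism of (M,φ) with implementing isometry u_θ. Then there exists a (unique) φ-preserving faithful normal conditional expectation E from M onto the subfactor P = θ(M), and e_θ = u_θ u_θ* is the orthogonal projection onto the closure of P·1̂_M, and satisfies E(x)e_θ = e_θ x e_θ for all x ∈ M (i.e., e_θ is the Jones projection associated to E). -/
set_option synthInstance.maxHeartbeats 400000
set_option maxHeartbeats 1000000

open scoped InnerProductSpace ComplexConjugate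

noncomputable section

namespace Paper

variable {H : Type} [NormedAddCommGroup H] [InnerProductSpace ℂ H] [CompleteSpace H]
variable {H' : Type} [NormedAddCommGroup H'] [InnerProductSpace ℂ H'] [CompleteSpace H']

/-- An operator is a (self-adjoint, idempotent) orthogonal projection. -/
def IsProjection (p : H →L[ℂ] H) : Prop := IsSelfAdjoint p ∧ p * p = p

/-- The vector state determined by a vector `Ω`. -/
def vecState (Ω : H) (x : H →L[ℂ] H) : ℂ := ⟪x Ω, Ω⟫_ℂ

/-- A normal state on a von Neumann algebra, described via its canonical form as a
countable convex combination of vector states. -/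
def IsNormalState (M : Set (H →L[ℂ] H)) (φ : (H →L[ℂ] H) → ℂ) : Prop :=
  ∃ ξ : ℕ → H, (Summable fun n => ‖ξ n‖ ^ 2) ∧ (∑' n, ‖ξ n‖ ^ 2) = 1 ∧
    ∀ x ∈ M, φ x = ∑' n, ⟪x (ξ n), ξ n⟫_ℂ

/-- Normality (complete additivity) of a map between operator algebras: it is `σ`-weakly
continuous, equivalently it preserves sums of orthogonal families of projections lying in the
given domain `S`. -/
def IsNormalMapOn (S : Set (H →L[ℂ] H)) (Θ : (H →L[ℂ] H) → (H' →L[ℂ] H')) : Prop :=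
  ∀ {ι : Type} (p : ι → (H →L[ℂ] H)) (q : H →L[ℂ] H),
    (∀ i, p i ∈ S) → q ∈ S →
    (∀ i, IsProjection (p i)) → (∀ i k, i ≠ k → p i * p k = 0) →
    (∀ ξ : H, HasSum (fun i => p i ξ) (q ξ)) →
    ∀ ξ : H', HasSum (fun i => Θ (p i) ξ) (Θ q ξ)

/-- `Θ` is a `*`-homomorphism on the subset `S` (typically a von Neumann algebra). -/
structure IsStarHomOn (S : Set (H →L[ℂ] H)) (Θ : (H →L[ℂ] H) → (H' →L[ℂ] H')) : Prop where
  map_add : ∀ x ∈ S, ∀ y ∈ S, Θ (x + y) = Θ x + Θ y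
  map_smul : ∀ (c : ℂ), ∀ x ∈ S, Θ (c • x) = c • Θ x
  map_mul : ∀ x ∈ S, ∀ y ∈ S, Θ (x * y) = Θ x * Θ y
  map_star : ∀ x ∈ S, Θ (star x) = star (Θ x)

/-- The (self-adjoint part of the) center of `S` is trivial. -/
def IsFactorSet (S : Set (H →L[ℂ] H)) : Prop :=
  ∀ x ∈ S, (∀ y ∈ S, x * y = y * x) → ∃ c : ℂ, x = c • (1 : H →L[ℂ] H)

/-- A type `I` factor: a factor possessing a minimal projection. -/
def IsTypeIFactorSet (S : Set (H →L[ℂ] H)) : Prop :=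
  IsFactorSet S ∧ ∃ p ∈ S, p ≠ 0 ∧ IsProjection p ∧
    ∀ q ∈ S, IsProjection q → q * p = q → q = 0 ∨ q = p

/-- `z` is the central support of the normal state `φ` of the von Neumann algebra `S`, i.e. the
smallest central projection of full measure. -/
structure IsCentralSupport (S : Set (H →L[ℂ] H)) (φ : (H →L[ℂ] H) → ℂ) (z : H →L[ℂ] H) :
    Prop where
  mem : z ∈ S
  proj : IsProjection z
  central : ∀ y ∈ S, z * y = y * z
  full : φ z = 1
  min : ∀ w ∈ S, IsProjection w → (∀ y ∈ S, w * y = y * w) → φ w = 1 → z * w = z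

/-- The von Neumann algebra generated by a (self-adjoint) set of operators. -/
def vN (S : Set (H →L[ℂ] H)) : Set (H →L[ℂ] H) := Set.centralizer (Set.centralizer S)

/-- Standard form data for a von Neumann algebra `M` with cyclic separating unit vector `Ω`:
`J` is the modular conjugation (an antiunitary involution fixing `Ω`, conjugating `M` onto its
commutant, and positive on the cone `{x j(x) Ω}`), and `j = J (·) J`. -/
structure StandardForm (M : VonNeumannAlgebra H) (Ω : H) (J : H → H)
    (j : (H →L[ℂ] H) → (H →L[ℂ] H)) : Prop where
  unit : ‖Ω‖ = 1
  cyclic : Dense {ξ : H | ∃ x ∈ M, x Ω = ξ}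
  separating : ∀ x ∈ M, x Ω = 0 → x = 0
  Jadd : ∀ ξ η : H, J (ξ + η) = J ξ + J η
  Jsmul : ∀ (c : ℂ) (ξ : H), J (c • ξ) = (starRingEnd ℂ) c • J ξ
  Jinvol : ∀ ξ : H, J (J ξ) = ξ
  Jinner : ∀ ξ η : H, ⟪J ξ, J η⟫_ℂ = ⟪η, ξ⟫_ℂ
  JΩ : J Ω = Ω
  jdef : ∀ (x : H →L[ℂ] H) (ξ : H), j x ξ = J (x (J ξ))
  jmapsTo : ∀ x ∈ M, j x ∈ Set.centralizer (M : Set (H →L[ℂ] H))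
  jsurj : ∀ y ∈ Set.centralizer (M : Set (H →L[ℂ] H)), ∃ x ∈ M, j x = y
  pos : ∀ x ∈ M, 0 ≤ (⟪(x * j x) Ω, Ω⟫_ℂ).re ∧ (⟪(x * j x) Ω, Ω⟫_ℂ).im = 0

/-- A unital `*`-endomorphism of `M` preserving the (faithful, normal) vector state of `Ω`. -/
structure StateEndo (M : VonNeumannAlgebra H) (Ω : H)
    (θ : (H →L[ℂ] H) → (H →L[ℂ] H)) : Prop where
  mapsTo : Set.MapsTo θ (M : Set (H →L[ℂ] H)) (M : Set (H →L[ℂ] H))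
  unital : θ 1 = 1
  hom : IsStarHomOn (M : Set (H →L[ℂ] H)) θ
  state : ∀ x ∈ M, ⟪θ x Ω, Ω⟫_ℂ = ⟪x Ω, Ω⟫_ℂ

/-- `u` is the isometry of the GNS space implementing `θ`:  `u x Ω = θ(x) Ω`. -/
def Implements (M : VonNeumannAlgebra H) (Ω : H) (θ : (H →L[ℂ] H) → (H →L[ℂ] H))
    (u : H →L[ℂ] H) : Prop :=
  (∀ ξ : H, ‖u ξ‖ = ‖ξ‖) ∧ ∀ x ∈ M, u (x Ω) = θ x Ω

/-- `u` commutes with the modular conjugation `J`. -/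
def CommutesWithJ (J : H → H) (u : H →L[ℂ] H) : Prop := ∀ ξ : H, u (J ξ) = J (u ξ)

/-- `θ` is equi-modular: its implementing isometry commutes with `J`. -/
def EquiModular (M : VonNeumannAlgebra H) (Ω : H) (J : H → H)
    (θ : (H →L[ℂ] H) → (H →L[ℂ] H)) : Prop :=
  ∃ u : H →L[ℂ] H, Implements M Ω θ u ∧ CommutesWithJ J u

/-- `Θ = θ⁽²⁾` is a unital normal `*`-endomorphism of `B(L²(M,φ))` extending `θ` and
`j ∘ θ ∘ j`. -/
structure IsExtension (M : VonNeumannAlgebra H) (j : (H →L[ℂ] H) → (H →L[ℂ] H))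
    (θ : (H →L[ℂ] H) → (H →L[ℂ] H)) (Θ : (H →L[ℂ] H) → (H →L[ℂ] H)) : Prop where
  hom : IsStarHomOn (Set.univ : Set (H →L[ℂ] H)) Θ
  unital : Θ 1 = 1
  normal : IsNormalMapOn (Set.univ : Set (H →L[ℂ] H)) Θ
  onM : ∀ x ∈ M, Θ x = θ x
  onComm : ∀ x ∈ M, Θ (j x) = j (θ x)

/-- `θ` is extendable. -/
def Extendable (M : VonNeumannAlgebra H) (j : (H →L[ℂ] H) → (H →L[ℂ] H))
    (θ : (H →L[ℂ] H) → (H →L[ℂ] H)) : Prop :=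
  ∃ Θ : (H →L[ℂ] H) → (H →L[ℂ] H), IsExtension M j θ Θ

/-- An `E₀`-semigroup on the von Neumann probability space `(M, ⟨·Ω,Ω⟩)`. -/
structure IsE0Semigroup (M : VonNeumannAlgebra H) (Ω : H)
    (α : ℝ → (H →L[ℂ] H) → (H →L[ℂ] H)) : Prop where
  endo : ∀ t : ℝ, 0 ≤ t → StateEndo M Ω (α t)
  id0 : ∀ x ∈ M, α 0 x = x
  semigroup : ∀ s t : ℝ, 0 ≤ s → 0 ≤ t → ∀ x ∈ M, α s (α t x) = α (s + t) x
  weakCont : ∀ x ∈ M, ∀ ξ η : H, ContinuousOn (fun t : ℝ => ⟪α t x ξ, η⟫_ℂ) (Set.Ici 0)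

/-- A `φ`-preserving faithful normal conditional expectation from `M` onto the subalgebra with
underlying set `P ⊆ M`, where `φ` is the vector state of `Ω`. -/
structure IsCondExp (M : VonNeumannAlgebra H) (Ω : H) (P : Set (H →L[ℂ] H))
    (E : (H →L[ℂ] H) → (H →L[ℂ] H)) : Prop where
  mapsTo : ∀ x ∈ M, E x ∈ P
  map_add : ∀ x ∈ M, ∀ y ∈ M, E (x + y) = E x + E y
  map_smul : ∀ (c : ℂ), ∀ x ∈ M, E (c • x) = c • E x
  map_star : ∀ x ∈ M, E (star x) = star (E x)
  idOnP : ∀ y ∈ P, E y = y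
  bimodule : ∀ a ∈ P, ∀ b ∈ P, ∀ x ∈ M, E (a * x * b) = a * E x * b
  positive : ∀ x ∈ M, (E (star x * x)).IsPositive
  state : ∀ x ∈ M, ⟪E x Ω, Ω⟫_ℂ = ⟪x Ω, Ω⟫_ℂ
  faithful : ∀ x ∈ M, E (star x * x) = 0 → x = 0
  normal : IsNormalMapOn (M : Set (H →L[ℂ] H)) E

/-!
Equi-modularity gives `u j(y) = j(θ y) u`, so `Ad u*` maps `M` into `(M')' = M`, and
`E = θ ∘ Ad u*` is a `φ`-preserving conditional expectation onto `θ(M)`; the intertwining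
relation `u y = θ(y) u` turns into the Jones relation `E(x) u u* = u u* x u u*`. For normality,
`E` is contractive on projections, and on the dense subspace `M'Ω` one has
`E(x) cΩ = c u u* (xΩ)`, which is normal in `x`. Uniqueness holds because the bimodule property
and `φ`-invariance fix `⟪E(x)Ω, aΩ⟫` for all `a ∈ θ(M)`, and `Ω` is separating.
-/

open ContinuousLinearMap

theorem _root_.ContinuousLinearMap.hasSum_apply_of_norm_sum_le_of_dense {𝕜 E F ι : Type*}
    [NontriviallyNormedField 𝕜] [SeminormedAddCommGroup E] [NormedSpace 𝕜 E]
    [NormedAddCommGroup F] [NormedSpace 𝕜 F] {T : ι → E →L[𝕜] F} {S : E →L[𝕜] F} {C : ℝ}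
    (hT : ∀ s : Finset ι, ‖∑ i ∈ s, T i‖ ≤ C) {D : Set E} (hD : Dense D)
    (hS : ∀ η ∈ D, HasSum (T · η) (S η)) (ξ : E) : HasSum (T · ξ) (S ξ) := by
  have hequi : Equicontinuous fun s : Finset ι => ⇑(∑ i ∈ s, T i) :=
    ((NormedSpace.equicontinuous_TFAE fun s : Finset ι => ∑ i ∈ s, T i).out 1 5 :).mpr ⟨C, hT⟩
  have hclosed := hequi.isClosed_setOfPred_tendsto
    (l := (SummationFilter.unconditional ι).filter) S.continuous
  simp only [HasSum, ← _root_.sum_apply] at hS ⊢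
  exact hclosed.closure_subset_iff.mpr hS (hD.closure_eq ▸ Set.mem_univ ξ)

theorem _root_.VonNeumannAlgebra.isClosed (M : VonNeumannAlgebra H) :
    IsClosed (M : Set (H →L[ℂ] H)) := by
  rw [← M.centralizer_centralizer]
  exact Set.isClosed_centralizer _

theorem _root_.IsStarProjection.mul_star_of_star_mul_self {R : Type*} [Monoid R] [StarMul R]
    {a : R} (ha : star a * a = 1) : IsStarProjection (a * star a) where
  isIdempotentElem := by
    rw [IsIdempotentElem, mul_assoc, ← mul_assoc (star a), ha, one_mul]
  isSelfAdjoint := by rw [IsSelfAdjoint, star_mul, star_star]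

theorem _root_.IsStarProjection.sum {R ι : Type*} [NonUnitalRing R] [StarRing R]
    {p : ι → R} (hp : ∀ i, IsStarProjection (p i)) (horth : Pairwise fun i k => p i * p k = 0)
    (s : Finset ι) : IsStarProjection (∑ i ∈ s, p i) := by
  classical
  induction s using Finset.induction with
  | empty => simp [IsStarProjection.zero]
  | insert k s hk ih =>
    rw [Finset.sum_insert hk]
    refine (hp k).add ih (Finset.mul_sum s p (p k) ▸ Finset.sum_eq_zero fun i hi => ?_)
    exact horth (ne_of_mem_of_not_mem hi hk).symm

theorem IsProjection.isStarProjection {p : H →L[ℂ] H} (hp : IsProjection p) :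
    IsStarProjection p :=
  ⟨hp.2, hp.1⟩

theorem _root_.IsStarProjection.isProjection {p : H →L[ℂ] H} (hp : IsStarProjection p) :
    IsProjection p :=
  ⟨hp.isSelfAdjoint, hp.isIdempotentElem⟩

section

variable {M : VonNeumannAlgebra H} {Ω : H} {J : H → H} {j : (H →L[ℂ] H) → (H →L[ℂ] H)}
  {θ : (H →L[ℂ] H) → (H →L[ℂ] H)} {u : H →L[ℂ] H}

theorem IsStarHomOn.map_zero (hθ : IsStarHomOn (M : Set (H →L[ℂ] H)) θ) : θ 0 = 0 := by
  simpa using hθ.map_smul 0 0 (zero_mem M)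

theorem IsStarHomOn.map_sub (hθ : IsStarHomOn (M : Set (H →L[ℂ] H)) θ) {a b : H →L[ℂ] H}
    (ha : a ∈ M) (hb : b ∈ M) : θ (a - b) = θ a - θ b := by
  have hneg : θ (-b) = -θ b := by simpa using hθ.map_smul (-1) b hb
  rw [sub_eq_add_neg, hθ.map_add a ha _ (neg_mem hb), hneg, sub_eq_add_neg]

theorem IsStarHomOn.map_sum (hθ : IsStarHomOn (M : Set (H →L[ℂ] H)) θ) {ι : Type*}
    (s : Finset ι) {a : ι → H →L[ℂ] H} (ha : ∀ i, a i ∈ M) :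
    θ (∑ i ∈ s, a i) = ∑ i ∈ s, θ (a i) := by
  classical
  induction s using Finset.induction with
  | empty => simpa using hθ.map_zero
  | insert i s hi ih =>
    rw [Finset.sum_insert hi, Finset.sum_insert hi,
      hθ.map_add _ (ha i) _ (sum_mem fun k _ => ha k), ih]

theorem IsStarHomOn.map_nonneg (hθ : IsStarHomOn (M : Set (H →L[ℂ] H)) θ) {z : H →L[ℂ] H}
    (hz : z ∈ M) (hz0 : 0 ≤ z) : 0 ≤ θ z := by
  have : IsClosed (M.toStarSubalgebra : Set (H →L[ℂ] H)) := M.isClosed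
  have hs : CFC.sqrt z ∈ M := by
    rw [CFC.sqrt_eq_real_sqrt z]
    exact cfcₙ_mem (s := M.toStarSubalgebra) _ hz
  have hθs : star (θ (CFC.sqrt z)) = θ (CFC.sqrt z) := by
    rw [← hθ.map_star _ hs, (IsSelfAdjoint.of_nonneg (CFC.sqrt_nonneg z)).star_eq]
  rw [← CFC.sqrt_mul_sqrt_self z, hθ.map_mul _ hs _ hs]
  simpa only [hθs] using star_mul_self_nonneg (θ (CFC.sqrt z))

theorem StateEndo.norm_map_le_one (hθ : StateEndo M Ω θ) {z : H →L[ℂ] H} (hz : z ∈ M)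
    (hz0 : 0 ≤ z) (hz1 : z ≤ 1) : ‖θ z‖ ≤ 1 := by
  refine (CStarAlgebra.norm_le_one_iff_of_nonneg _ (hθ.hom.map_nonneg hz hz0)).mpr ?_
  rw [← sub_nonneg, ← hθ.unital, ← hθ.hom.map_sub (one_mem M) hz]
  exact hθ.hom.map_nonneg (sub_mem (one_mem M) hz) (sub_nonneg.mpr hz1)

theorem Implements.adjoint_mul_self (hu : Implements M Ω θ u) : adjoint u * u = 1 :=
  (norm_map_iff_adjoint_comp_self u).mp hu.1

theorem Implements.apply_vector_eq_self (hθ1 : θ 1 = 1) (hu : Implements M Ω θ u) : u Ω = Ω := by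
  simpa [hθ1] using hu.2 1 (one_mem M)

theorem Implements.mul_eq_map_mul (hΩ : Dense {ξ : H | ∃ x ∈ M, x Ω = ξ})
    (hθ : IsStarHomOn (M : Set (H →L[ℂ] H)) θ) (hu : Implements M Ω θ u) {y : H →L[ℂ] H}
    (hy : y ∈ M) : u * y = θ y * u := by
  refine DFunLike.coe_injective (Continuous.ext_on hΩ (u * y).continuous (θ y * u).continuous ?_)
  rintro _ ⟨x, hx, rfl⟩
  simp only [mul_apply_eq_comp]
  rw [← mul_apply_eq_comp y, hu.2 _ (mul_mem hy hx), hθ.map_mul y hy x hx,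
    mul_apply_eq_comp, hu.2 x hx]

theorem Implements.adjoint_mul_map (hΩ : Dense {ξ : H | ∃ x ∈ M, x Ω = ξ})
    (hθ : IsStarHomOn (M : Set (H →L[ℂ] H)) θ) (hu : Implements M Ω θ u) {y : H →L[ℂ] H}
    (hy : y ∈ M) : adjoint u * θ y = y * adjoint u := by
  have h := congrArg star (hu.mul_eq_map_mul hΩ hθ (star_mem hy))
  rwa [star_mul, star_mul, star_star, ← hθ.map_star _ (star_mem hy), star_star,
    star_eq_adjoint, eq_comm] at h

theorem Implements.range_mul_adjoint (hΩ : Dense {ξ : H | ∃ x ∈ M, x Ω = ξ})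
    (hu : Implements M Ω θ u) :
    Set.range ⇑(u * adjoint u) = closure {ξ : H | ∃ y ∈ θ '' (M : Set (H →L[ℂ] H)), y Ω = ξ} := by
  have himage : {ξ : H | ∃ y ∈ θ '' (M : Set (H →L[ℂ] H)), y Ω = ξ} =
      u '' {ξ : H | ∃ x ∈ M, x Ω = ξ} := by
    ext ξ
    constructor
    · rintro ⟨_, ⟨x, hx, rfl⟩, rfl⟩
      exact ⟨x Ω, ⟨x, hx, rfl⟩, hu.2 x hx⟩
    · rintro ⟨_, ⟨x, hx, rfl⟩, rfl⟩
      exact ⟨θ x, ⟨x, hx, rfl⟩, (hu.2 x hx).symm⟩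
  have hleft : Function.LeftInverse (adjoint u) u := fun ξ => by
    rw [← mul_apply_eq_comp, hu.adjoint_mul_self, one_apply_eq_self]
  rw [himage, (AddMonoidHomClass.isometry_of_norm u hu.1).isClosedEmbedding.closure_image_eq,
    hΩ.closure_eq, Set.image_univ, FunLike.coe_mul_eq_comp, Set.range_comp, hleft.surjective.range_eq,
    Set.image_univ]

theorem StandardForm.map_star (hSF : StandardForm M Ω J j) (y : H →L[ℂ] H) :
    j (star y) = star (j y) := by
  rw [star_eq_adjoint (j y)]
  ext η
  refine ext_inner_left ℂ fun ξ => ?_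
  rw [adjoint_inner_right, hSF.jdef, hSF.jdef]
  calc ⟪ξ, J (star y (J η))⟫_ℂ = ⟪J (J ξ), J (star y (J η))⟫_ℂ := by rw [hSF.Jinvol]
    _ = ⟪J η, y (J ξ)⟫_ℂ := by rw [hSF.Jinner, star_eq_adjoint, adjoint_inner_left]
    _ = ⟪J (y (J ξ)), η⟫_ℂ := by rw [← hSF.Jinner, hSF.Jinvol]

theorem StandardForm.isometry_J (hSF : StandardForm M Ω J j) : Isometry J := by
  refine AddMonoidHomClass.isometry_of_norm (AddMonoidHom.mk' J hSF.Jadd) fun ξ => ?_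
  simp only [AddMonoidHom.mk'_apply, @norm_eq_sqrt_re_inner ℂ, hSF.Jinner]

theorem StandardForm.dense_commutant_orbit (hSF : StandardForm M Ω J j) :
    Dense {ξ : H | ∃ c ∈ Set.centralizer (M : Set (H →L[ℂ] H)), c Ω = ξ} := by
  have hJ : DenseRange J := Function.Surjective.denseRange fun ξ => ⟨J ξ, hSF.Jinvol ξ⟩
  refine (hJ.dense_image hSF.isometry_J.continuous hSF.cyclic).mono ?_
  rintro _ ⟨_, ⟨x, hx, rfl⟩, rfl⟩
  exact ⟨j x, hSF.jmapsTo x hx, by rw [hSF.jdef, hSF.JΩ]⟩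

theorem Implements.mul_j (hSF : StandardForm M Ω J j)
    (hθ : IsStarHomOn (M : Set (H →L[ℂ] H)) θ) (hu : Implements M Ω θ u)
    (hequi : CommutesWithJ J u) {y : H →L[ℂ] H} (hy : y ∈ M) : u * j y = j (θ y) * u := by
  ext ξ
  have h := congrArg (· (J ξ)) (hu.mul_eq_map_mul hSF.cyclic hθ hy)
  simp only [mul_apply_eq_comp] at h ⊢
  rw [hSF.jdef, hSF.jdef, hequi, h, hequi]

theorem Implements.j_mul_adjoint (hSF : StandardForm M Ω J j)
    (hθ : IsStarHomOn (M : Set (H →L[ℂ] H)) θ) (hu : Implements M Ω θ u)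
    (hequi : CommutesWithJ J u) {y : H →L[ℂ] H} (hy : y ∈ M) :
    j y * adjoint u = adjoint u * j (θ y) := by
  have h := congrArg star (hu.mul_j hSF hθ hequi (star_mem hy))
  rwa [star_mul, star_mul, ← hSF.map_star, ← hSF.map_star, star_star,
    ← hθ.map_star _ (star_mem hy), star_star, star_eq_adjoint] at h

theorem Implements.adjoint_mul_mul_mem (hSF : StandardForm M Ω J j) (hθ : StateEndo M Ω θ)
    (hu : Implements M Ω θ u) (hequi : CommutesWithJ J u) {x : H →L[ℂ] H} (hx : x ∈ M) :
    adjoint u * x * u ∈ M := by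
  rw [← SetLike.mem_coe, ← M.centralizer_centralizer]
  intro c hc
  obtain ⟨y, hy, rfl⟩ := hSF.jsurj c hc
  have hcomm : j (θ y) * x = x * j (θ y) := (hSF.jmapsTo (θ y) (hθ.mapsTo hy) x hx).symm
  calc j y * (adjoint u * x * u)
      = adjoint u * (j (θ y) * x) * u := by
        rw [← mul_assoc, ← mul_assoc, hu.j_mul_adjoint hSF hθ.hom hequi hy, mul_assoc _ _ x]
    _ = adjoint u * x * u * j y := by
        rw [hcomm, mul_assoc _ _ u, mul_assoc x, ← hu.mul_j hSF hθ.hom hequi hy]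
        simp only [mul_assoc]

def condExpOf (θ : (H →L[ℂ] H) → (H →L[ℂ] H)) (u x : H →L[ℂ] H) : H →L[ℂ] H :=
  θ (adjoint u * x * u)

theorem condExpOf_map (hΩ : Dense {ξ : H | ∃ x ∈ M, x Ω = ξ})
    (hθ : IsStarHomOn (M : Set (H →L[ℂ] H)) θ) (hu : Implements M Ω θ u) {a : H →L[ℂ] H}
    (ha : a ∈ M) : condExpOf θ u (θ a) = θ a := by
  rw [condExpOf, hu.adjoint_mul_map hΩ hθ ha, mul_assoc, hu.adjoint_mul_self, mul_one]

theorem condExpOf_mul_range_projection (hΩ : Dense {ξ : H | ∃ x ∈ M, x Ω = ξ})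
    (hθ : IsStarHomOn (M : Set (H →L[ℂ] H)) θ) (hu : Implements M Ω θ u) {x : H →L[ℂ] H}
    (hx : adjoint u * x * u ∈ M) :
    condExpOf θ u x * (u * adjoint u) = u * adjoint u * x * (u * adjoint u) := by
  rw [condExpOf, ← mul_assoc, ← hu.mul_eq_map_mul hΩ hθ hx]
  simp only [mul_assoc]

theorem condExpOf_apply_commutant (hθ : StateEndo M Ω θ) (hu : Implements M Ω θ u)
    {x : H →L[ℂ] H} (hx : adjoint u * x * u ∈ M) {c : H →L[ℂ] H}
    (hc : c ∈ Set.centralizer (M : Set (H →L[ℂ] H))) :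
    condExpOf θ u x (c Ω) = (c * u * adjoint u) (x Ω) := by
  have hcomm : condExpOf θ u x * c = c * condExpOf θ u x := hc _ (hθ.mapsTo hx)
  rw [← mul_apply_eq_comp, hcomm, mul_apply_eq_comp, condExpOf, ← hu.2 _ hx]
  simp only [mul_apply_eq_comp, hu.apply_vector_eq_self hθ.unital]

theorem inner_condExpOf_apply (hθ : StateEndo M Ω θ) (hu : Implements M Ω θ u)
    {x : H →L[ℂ] H} (hx : adjoint u * x * u ∈ M) :
    ⟪condExpOf θ u x Ω, Ω⟫_ℂ = ⟪x Ω, Ω⟫_ℂ := by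
  rw [condExpOf, hθ.state _ hx]
  simp only [mul_apply_eq_comp, hu.apply_vector_eq_self hθ.unital, adjoint_inner_left]

theorem norm_condExpOf_le_one (hθ : StateEndo M Ω θ) (hu : Implements M Ω θ u)
    {p : H →L[ℂ] H} (hp : IsStarProjection p) (hpu : adjoint u * p * u ∈ M) :
    ‖condExpOf θ u p‖ ≤ 1 := by
  refine hθ.norm_map_le_one hpu ?_ ?_
  · simpa [star_eq_adjoint] using star_left_conjugate_nonneg hp.nonneg u
  · simpa [star_eq_adjoint, hu.adjoint_mul_self] using star_left_conjugate_le_conjugate hp.le_one u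

theorem isNormalMapOn_condExpOf (hSF : StandardForm M Ω J j) (hθ : StateEndo M Ω θ)
    (hu : Implements M Ω θ u) (hequi : CommutesWithJ J u) :
    IsNormalMapOn (M : Set (H →L[ℂ] H)) (condExpOf θ u) := by
  intro ι p q hpM hqM hp horth hsum
  have hmem : ∀ {x}, x ∈ M → adjoint u * x * u ∈ M := hu.adjoint_mul_mul_mem hSF hθ hequi
  refine ContinuousLinearMap.hasSum_apply_of_norm_sum_le_of_dense (C := 1) (fun s => ?_)
    hSF.dense_commutant_orbit ?_
  · have hP := IsStarProjection.sum (fun i => (hp i).isStarProjection) horth s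
    have hPM : ∑ i ∈ s, p i ∈ M := sum_mem fun i _ => hpM i
    have hsum_eq : ∑ i ∈ s, condExpOf θ u (p i) = condExpOf θ u (∑ i ∈ s, p i) := by
      simp only [condExpOf, Finset.mul_sum, Finset.sum_mul]
      exact (hθ.hom.map_sum s fun i => hmem (hpM i)).symm
    rw [hsum_eq]
    exact norm_condExpOf_le_one hθ hu hP (hmem hPM)
  · rintro _ ⟨c, hc, rfl⟩
    simp only [condExpOf_apply_commutant hθ hu (hmem (hpM _)) hc,
      condExpOf_apply_commutant hθ hu (hmem hqM) hc]
    exact (hsum Ω).mapL _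

theorem isCondExp_condExpOf (hSF : StandardForm M Ω J j) (hθ : StateEndo M Ω θ)
    (hu : Implements M Ω θ u) (hequi : CommutesWithJ J u) :
    IsCondExp M Ω (θ '' (M : Set (H →L[ℂ] H))) (condExpOf θ u) := by
  have hmem : ∀ {x}, x ∈ M → adjoint u * x * u ∈ M := hu.adjoint_mul_mul_mem hSF hθ hequi
  have hsa : ∀ x : H →L[ℂ] H, star (adjoint u * x * u) = adjoint u * star x * u := fun x => by
    rw [star_mul, star_mul, star_eq_adjoint u, star_eq_adjoint (adjoint u), adjoint_adjoint,
      mul_assoc]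
  constructor
  case mapsTo => exact fun x hx => ⟨_, hmem hx, rfl⟩
  case state => exact fun x hx => inner_condExpOf_apply hθ hu (hmem hx)
  case normal => exact isNormalMapOn_condExpOf hSF hθ hu hequi
  case map_add =>
    intro x hx y hy
    simp only [condExpOf, mul_add, add_mul]
    exact hθ.hom.map_add _ (hmem hx) _ (hmem hy)
  case map_smul =>
    intro c x hx
    simp only [condExpOf, mul_smul_comm, smul_mul_assoc]
    exact hθ.hom.map_smul _ _ (hmem hx)
  case map_star =>
    intro x hx
    simp only [condExpOf, ← hsa]
    exact hθ.hom.map_star _ (hmem hx)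
  case idOnP =>
    rintro _ ⟨a, ha, rfl⟩
    exact condExpOf_map hSF.cyclic hθ.hom hu ha
  case bimodule =>
    rintro _ ⟨a, ha, rfl⟩ _ ⟨b, hb, rfl⟩ x hx
    have h : adjoint u * (θ a * x * θ b) * u = a * (adjoint u * x * u) * b :=
      calc adjoint u * (θ a * x * θ b) * u = adjoint u * θ a * x * (θ b * u) := by
            simp only [mul_assoc]
        _ = a * adjoint u * x * (u * b) := by
            rw [hu.adjoint_mul_map hSF.cyclic hθ.hom ha, hu.mul_eq_map_mul hSF.cyclic hθ.hom hb]
        _ = a * (adjoint u * x * u) * b := by simp only [mul_assoc]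
    rw [condExpOf, condExpOf, h, hθ.hom.map_mul _ (mul_mem ha (hmem hx)) _ hb,
      hθ.hom.map_mul _ ha _ (hmem hx)]
  case positive =>
    intro x hx
    have h0 : 0 ≤ adjoint u * (star x * x) * u := by
      simpa [star_eq_adjoint] using star_left_conjugate_nonneg (star_mul_self_nonneg x) u
    exact (nonneg_iff_isPositive _).mp (hθ.hom.map_nonneg (hmem (mul_mem (star_mem hx) hx)) h0)
  case faithful =>
    intro x hx hx0
    have h := inner_condExpOf_apply hθ hu (hmem (mul_mem (star_mem hx) hx))
    rw [hx0, zero_apply, inner_zero_left, mul_apply_eq_comp, star_eq_adjoint,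
      adjoint_inner_left, eq_comm, inner_self_eq_zero] at h
    exact hSF.separating x hx h

theorem IsCondExp.eqOn {P : Set (H →L[ℂ] H)} {E E' : (H →L[ℂ] H) → (H →L[ℂ] H)}
    (hE : IsCondExp M Ω P E) (hE' : IsCondExp M Ω P E') (hPM : P ⊆ M) (hP1 : 1 ∈ P)
    (hPstar : ∀ a ∈ P, star a ∈ P) (hPsub : ∀ a ∈ P, ∀ b ∈ P, a - b ∈ P)
    (hsep : ∀ x ∈ M, x Ω = 0 → x = 0) : Set.EqOn E E' M := by
  have hinner : ∀ {F}, IsCondExp M Ω P F → ∀ x ∈ M, ∀ a ∈ P,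
      ⟪F x Ω, a Ω⟫_ℂ = ⟪(star a * x) Ω, Ω⟫_ℂ := by
    intro F hF x hx a ha
    have h := hF.bimodule _ (hPstar a ha) 1 hP1 x hx
    rw [mul_one, mul_one] at h
    rw [← hF.state _ (mul_mem (hPM (hPstar a ha)) hx), h, mul_apply_eq_comp, star_eq_adjoint,
      adjoint_inner_left]
  intro x hx
  have hd := hPsub _ (hE.mapsTo x hx) _ (hE'.mapsTo x hx)
  have hsub : ∀ v, ⟪(E x - E' x) Ω, v⟫_ℂ = ⟪E x Ω, v⟫_ℂ - ⟪E' x Ω, v⟫_ℂ := fun v => by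
    rw [sub_apply, inner_sub_left]
  have h : ⟪(E x - E' x) Ω, (E x - E' x) Ω⟫_ℂ = 0 := by
    rw [hsub, hinner hE x hx _ hd, hinner hE' x hx _ hd, sub_self]
  exact sub_eq_zero.mp (hsep _ (hPM hd) (inner_self_eq_zero.mp h))

end

theorem remark_3_3_general
    (M : VonNeumannAlgebra H) (Ω : H) (J : H → H) (j : (H →L[ℂ] H) → (H →L[ℂ] H))
    (hSF : StandardForm M Ω J j)
    (θ : (H →L[ℂ] H) → (H →L[ℂ] H)) (hθ : StateEndo M Ω θ)
    (u : H →L[ℂ] H) (hu : Implements M Ω θ u) (hequi : CommutesWithJ J u) :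
    (∃ E : (H →L[ℂ] H) → (H →L[ℂ] H),
      IsCondExp M Ω (θ '' (M : Set (H →L[ℂ] H))) E ∧
      (∀ x ∈ M, E x * (u * ContinuousLinearMap.adjoint u) =
        (u * ContinuousLinearMap.adjoint u) * x * (u * ContinuousLinearMap.adjoint u)) ∧
      ∀ E' : (H →L[ℂ] H) → (H →L[ℂ] H),
        IsCondExp M Ω (θ '' (M : Set (H →L[ℂ] H))) E' →
        Set.EqOn E' E (M : Set (H →L[ℂ] H))) ∧
    IsProjection (u * ContinuousLinearMap.adjoint u) ∧
    Set.range ⇑(u * ContinuousLinearMap.adjoint u) =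
      closure {ξ : H | ∃ y ∈ θ '' (M : Set (H →L[ℂ] H)), y Ω = ξ} := by
  have hE := isCondExp_condExpOf hSF hθ hu hequi
  refine ⟨⟨condExpOf θ u, hE, fun x hx => ?_, fun E' hE' => ?_⟩,
    (IsStarProjection.mul_star_of_star_mul_self
      (star_eq_adjoint u ▸ hu.adjoint_mul_self)).isProjection,
    hu.range_mul_adjoint hSF.cyclic⟩
  · exact condExpOf_mul_range_projection hSF.cyclic hθ.hom hu
      (hu.adjoint_mul_mul_mem hSF hθ hequi hx)
  · refine hE'.eqOn hE hθ.mapsTo.image_subset ⟨1, one_mem M, hθ.unital⟩ ?_ ?_ hSF.separating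
    · rintro _ ⟨a, ha, rfl⟩
      exact ⟨star a, star_mem ha, hθ.hom.map_star a ha⟩
    · rintro _ ⟨a, ha, rfl⟩ _ ⟨b, hb, rfl⟩
      exact ⟨a - b, sub_mem ha hb, hθ.hom.map_sub ha hb⟩

/-- **Remark 3.3.**  If `θ` is an equi-modular endomorphism of the factor `M` in standard form,
then there is a unique `φ`-preserving faithful normal conditional expectation
`E : M → P = θ(M)`; moreover `e_θ = u_θ u_θ*` is the orthogonal projection onto the closure of
`P Ω` and is the Jones projection of `E`:  `E(x) e_θ = e_θ x e_θ` for all `x ∈ M`. -/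
theorem remark_3_3
    (M : VonNeumannAlgebra H) (Ω : H) (J : H → H) (j : (H →L[ℂ] H) → (H →L[ℂ] H))
    (hSF : StandardForm M Ω J j) (hM : IsFactorSet (M : Set (H →L[ℂ] H)))
    (θ : (H →L[ℂ] H) → (H →L[ℂ] H)) (hθ : StateEndo M Ω θ)
    (u : H →L[ℂ] H) (hu : Implements M Ω θ u) (hequi : CommutesWithJ J u) :
    (∃ E : (H →L[ℂ] H) → (H →L[ℂ] H),
      IsCondExp M Ω (θ '' (M : Set (H →L[ℂ] H))) E ∧
      (∀ x ∈ M, E x * (u * ContinuousLinearMap.adjoint u) =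
        (u * ContinuousLinearMap.adjoint u) * x * (u * ContinuousLinearMap.adjoint u)) ∧
      ∀ E' : (H →L[ℂ] H) → (H →L[ℂ] H),
        IsCondExp M Ω (θ '' (M : Set (H →L[ℂ] H))) E' →
        Set.EqOn E' E (M : Set (H →L[ℂ] H))) ∧
    IsProjection (u * ContinuousLinearMap.adjoint u) ∧
    Set.range ⇑(u * ContinuousLinearMap.adjoint u) =
      closure {ξ : H | ∃ y ∈ θ '' (M : Set (H →L[ℂ] H)), y Ω = ξ} :=
  remark_3_3_general M Ω J j hSF θ hθ u hu hequi

end Paper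
end
end

section
/- Let φ be a faithful normal state on a factor M acting standardly on L²(M,φ), and let θ be an equi-modular endomorphism of (M,φ). Then: (1) the equation θ′ = j∘θ∘j defines a unital normal *-endomorphism of the commutant M′ which preserves the state φ′ = conjugate of φ∘j on M′; and (2) under the canonical identifications L²(M′,φ′) = L²(M,φ) and 1̂_{M′} = 1̂_M, the isometry u_{θ′} implementing θ′ coincides with u_θ. -/
set_option synthInstance.maxHeartbeats 400000
set_option maxHeartbeats 1000000

open scoped InnerProductSpace ComplexConjugate

noncomputable section

namespace Paper

variable {H : Type} [NormedAddCommGroup H] [InnerProductSpace ℂ H] [CompleteSpace H]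
variable {H' : Type} [NormedAddCommGroup H'] [InnerProductSpace ℂ H'] [CompleteSpace H']

/-- **Theorem 3.4 (1) and (2).**  Let `θ` be an equi-modular endomorphism of the factor `M` in
standard form with implementing isometry `u = u_θ`.  Then `θ′ = j ∘ θ ∘ j` is a unital normal
`*`-endomorphism of the commutant `M′` preserving the state `φ′ = vector state of Ω` on `M′`
(which under the canonical identifications `L²(M′,φ′) = L²(M,φ)`, `1̂_{M′} = 1̂_M` is
`conj (φ ∘ j)`), and the isometry implementing `θ′` coincides with `u_θ`. -/
theorem theorem_3_4_parts_1_2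
    (M : VonNeumannAlgebra H) (Ω : H) (J : H → H) (j : (H →L[ℂ] H) → (H →L[ℂ] H))
    (hSF : StandardForm M Ω J j) (hM : IsFactorSet (M : Set (H →L[ℂ] H)))
    (θ : (H →L[ℂ] H) → (H →L[ℂ] H)) (hθ : StateEndo M Ω θ)
    (u : H →L[ℂ] H) (hu : Implements M Ω θ u) (hequi : CommutesWithJ J u) :
    -- (1) `θ′ = j ∘ θ ∘ j` is a unital `*`-endomorphism of `M′` preserving `φ′`:
    (Set.MapsTo (fun y => j (θ (j y))) (Set.centralizer (M : Set (H →L[ℂ] H)))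
      (Set.centralizer (M : Set (H →L[ℂ] H)))) ∧
    (j (θ (j 1)) = 1) ∧
    IsStarHomOn (Set.centralizer (M : Set (H →L[ℂ] H))) (fun y => j (θ (j y))) ∧
    (∀ y ∈ Set.centralizer (M : Set (H →L[ℂ] H)), ⟪j (θ (j y)) Ω, Ω⟫_ℂ = ⟪y Ω, Ω⟫_ℂ) ∧
    -- φ′ is the conjugate of φ ∘ j on M′:
    (∀ y ∈ Set.centralizer (M : Set (H →L[ℂ] H)),
      ⟪y Ω, Ω⟫_ℂ = (starRingEnd ℂ) ⟪j y Ω, Ω⟫_ℂ) ∧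
    -- (2) under the identifications `L²(M′,φ′) = L²(M,φ)` and `1̂_{M′} = 1̂_M`, the isometry
    -- implementing `θ′` is `u_θ` itself:
    ∀ y ∈ Set.centralizer (M : Set (H →L[ℂ] H)), u (y Ω) = j (θ (j y)) Ω := by

  obtain ⟨_unit, _cyc, _sep, Jadd, Jsmul, Jinvol, Jinner, JΩ, jdef, jmapsTo, jsurj, _pos⟩ := hSF
  have jj : ∀ x : H →L[ℂ] H, j (j x) = x := by
    intro x; ext ξ; rw [jdef, jdef, Jinvol, Jinvol]
  have jmemM : ∀ y ∈ Set.centralizer (M : Set (H →L[ℂ] H)),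
      j y ∈ (M : Set (H →L[ℂ] H)) := by
    intro y hy
    obtain ⟨x, hx, hjx⟩ := jsurj y hy
    rw [← hjx, jj]; exact hx
  have jadd : ∀ x y : H →L[ℂ] H, j (x + y) = j x + j y := by
    intro x y; ext ξ
    simp only [jdef, ContinuousLinearMap.add_apply, Jadd]
  have jsmul : ∀ (c : ℂ) (x : H →L[ℂ] H), j (c • x) = (starRingEnd ℂ) c • j x := by
    intro c x; ext ξ
    simp only [jdef, ContinuousLinearMap.smul_apply, Jsmul]
  have jmul : ∀ x y : H →L[ℂ] H, j (x * y) = j x * j y := by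
    intro x y; ext ξ
    simp only [jdef, ContinuousLinearMap.mul_apply, Jinvol]
  have jone : j 1 = 1 := by
    ext ξ; simp only [jdef, ContinuousLinearMap.one_apply, Jinvol]
  have jstar : ∀ x : H →L[ℂ] H, j (star x) = star (j x) := by
    intro x; ext ξ
    apply ext_inner_right ℂ
    intro η
    rw [jdef]
    have h1 : ⟪J ((star x) (J ξ)), η⟫_ℂ = ⟪J ((star x) (J ξ)), J (J η)⟫_ℂ := by rw [Jinvol]
    rw [h1, Jinner]
    rw [ContinuousLinearMap.star_eq_adjoint, ContinuousLinearMap.adjoint_inner_right]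
    have h2 : ⟪x (J η), J ξ⟫_ℂ = ⟪J (J (x (J η))), J ξ⟫_ℂ := by rw [Jinvol]
    rw [h2, Jinner, ← jdef]
    rw [ContinuousLinearMap.star_eq_adjoint, ContinuousLinearMap.adjoint_inner_left]
  -- inner products with Ω and J
  have JinnerΩ : ∀ ξ : H, ⟪J ξ, Ω⟫_ℂ = (starRingEnd ℂ) ⟪ξ, Ω⟫_ℂ := by
    intro ξ
    have : ⟪J ξ, Ω⟫_ℂ = ⟪J ξ, J Ω⟫_ℂ := by rw [JΩ]
    rw [this, Jinner, ← inner_conj_symm]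
  have hjΩ : ∀ x : H →L[ℂ] H, j x Ω = J (x Ω) := by
    intro x; rw [jdef, JΩ]
  have key5 : ∀ y ∈ Set.centralizer (M : Set (H →L[ℂ] H)),
      ⟪y Ω, Ω⟫_ℂ = (starRingEnd ℂ) ⟪j y Ω, Ω⟫_ℂ := by
    intro y _
    rw [hjΩ, JinnerΩ]
    simp
  refine ⟨?_, ?_, ?_, ?_, key5, ?_⟩
  · -- MapsTo
    intro y hy
    exact jmapsTo _ (hθ.mapsTo (jmemM y hy))
  · rw [jone, hθ.unital, jone]
  · -- star hom on centralizer
    constructor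
    · intro x hx y hy
      rw [jadd, hθ.hom.map_add _ (jmemM x hx) _ (jmemM y hy), jadd]
    · intro c x hx
      rw [jsmul, hθ.hom.map_smul _ _ (jmemM x hx), jsmul]
      simp
    · intro x hx y hy
      rw [jmul, hθ.hom.map_mul _ (jmemM x hx) _ (jmemM y hy), jmul]
    · intro x hx
      rw [jstar, hθ.hom.map_star _ (jmemM x hx), jstar]
  · -- state preservation
    intro y hy
    have h1 : j (θ (j y)) Ω = J (θ (j y) Ω) := hjΩ _
    rw [h1, JinnerΩ, hθ.state _ (jmemM y hy), key5 y hy]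
  · -- (2)
    intro y hy
    obtain ⟨x, hx, hjx⟩ := jsurj y hy
    have hjy : j y = x := by rw [← hjx, jj]
    have h1 : y Ω = J (x Ω) := by rw [← hjx, hjΩ]
    rw [h1, hequi, hu.2 x hx, hjy, hjΩ]


end Paper
end
end

section
/- Let α = {α_t : t ≥ 0} be an E₀-semigroup on a factorial non-commutative probability space (M,φ) with φ faithful, such that each α_t is equi-modular. If α_t is an extendable endomorphism for some t > 0, then α_s is extendable for every 0 ≤ s < t; consequently, if α_t is extendable for some t > 0 then the E₀-semigroup α itself is extendable (every α_s, s ≥ 0, is extendable). -/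
set_option synthInstance.maxHeartbeats 400000
set_option maxHeartbeats 1000000

open scoped InnerProductSpace ComplexConjugate

noncomputable section

namespace Paper

variable {H : Type} [NormedAddCommGroup H] [InnerProductSpace ℂ H] [CompleteSpace H]
variable {H' : Type} [NormedAddCommGroup H'] [InnerProductSpace ℂ H'] [CompleteSpace H']

/-!
If `α_t = α_{t-s} ∘ α_s` extends to `Ψ` on `B(L²(M))` and the isometry `u` implementing `α_{t-s}`
commutes with `J`, then `u u*` commutes with `Ψ(M)` and `Ψ(M')`. Since `M ∨ M' = B(L²(M))` for a
factor and `Ψ` is normal, `u u*` commutes with all of `Ψ(B(L²(M)))`, so `T ↦ u* Ψ(T) u` is a normal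
unital `*`-endomorphism extending `α_s`. For arbitrary `s`, compare with `α_{nt} = α_t^n`.
-/

open InnerProductSpace
open scoped CStarAlgebra

theorem IsFactorSet.exists_eq_smul_one {M : VonNeumannAlgebra H}
    (hM : IsFactorSet (M : Set (H →L[ℂ] H))) {d : H →L[ℂ] H}
    (hdM : ∀ x ∈ (M : Set (H →L[ℂ] H)), Commute d x)
    (hdM' : ∀ y ∈ Set.centralizer (M : Set (H →L[ℂ] H)), Commute d y) :
    ∃ c : ℂ, d = c • (1 : H →L[ℂ] H) := by
  have hd : d ∈ (M : Set (H →L[ℂ] H)) := by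
    rw [← M.centralizer_centralizer]
    exact fun y hy => (hdM' y hy).eq.symm
  exact hM d hd fun x hx => (hdM x hx).eq

/-- As `ω` varies, these maps exhibit `Ψ` as an amplification `T ↦ T ⊗ 1`. -/
def intertwiner (Ψ : (H →L[ℂ] H) →⋆ₐ[ℂ] (H →L[ℂ] H)) (Ω ω : H) : H →L[ℂ] H :=
  ContinuousLinearMap.apply ℂ H ω ∘L ⟨Ψ.toAlgHom.toLinearMap, map_continuous Ψ⟩ ∘L
    (rankOne ℂ).flip Ω

section Intertwiner

variable (Ψ : (H →L[ℂ] H) →⋆ₐ[ℂ] (H →L[ℂ] H)) (Ω ω : H)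

@[simp]
theorem intertwiner_apply (ξ : H) : intertwiner Ψ Ω ω ξ = Ψ (rankOne ℂ ξ Ω) ω := rfl

theorem map_mul_intertwiner (T : H →L[ℂ] H) :
    Ψ T * intertwiner Ψ Ω ω = intertwiner Ψ Ω ω * T := by
  ext ξ
  simp only [mul_apply_eq_comp, intertwiner_apply]
  rw [← mul_apply_eq_comp, ← map_mul, ContinuousLinearMap.mul_def, comp_rankOne]

theorem star_intertwiner_mul_map (T : H →L[ℂ] H) :
    star (intertwiner Ψ Ω ω) * Ψ T = T * star (intertwiner Ψ Ω ω) := by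
  simpa [map_star] using congrArg star (map_mul_intertwiner Ψ Ω ω (star T))

theorem commute_star_intertwiner_mul_mul {p T : H →L[ℂ] H} (hp : Commute p (Ψ T)) (ω' : H) :
    Commute (star (intertwiner Ψ Ω ω') * p * intertwiner Ψ Ω ω) T :=
  calc star (intertwiner Ψ Ω ω') * p * intertwiner Ψ Ω ω * T
      = star (intertwiner Ψ Ω ω') * (p * Ψ T) * intertwiner Ψ Ω ω := by
        simp only [mul_assoc, map_mul_intertwiner]
    _ = T * (star (intertwiner Ψ Ω ω') * p * intertwiner Ψ Ω ω) := by
        rw [hp.eq, ← mul_assoc, ← mul_assoc, star_intertwiner_mul_map]; simp only [mul_assoc]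

variable {Ψ Ω}

theorem eq_zero_of_inner_intertwiner_eq_zero (hΨ : IsNormalMapOn Set.univ Ψ) (hΩ : ‖Ω‖ = 1)
    {χ : H} (hχ : ∀ ω ξ, ⟪intertwiner Ψ Ω ω ξ, χ⟫_ℂ = 0) : χ = 0 := by
  obtain ⟨_, b, -⟩ := exists_hilbertBasis ℂ H
  have hb : ∀ i, ‖b i‖ = 1 := b.orthonormal.1
  have hsum : HasSum (fun i => Ψ (rankOne ℂ (b i) (b i)) χ) χ := by
    have hproj i := isStarProjection_rankOne_self (𝕜 := ℂ) (hb i)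
    simpa using hΨ (fun i => rankOne ℂ (b i) (b i)) 1 (fun _ => trivial) trivial
      (fun i => ⟨(hproj i).isSelfAdjoint, (hproj i).isIdempotentElem⟩)
      (fun i k hik => by
        rw [ContinuousLinearMap.mul_def, rankOne_comp_rankOne, b.orthonormal.2 hik, zero_smul])
      (fun ξ => by simpa [b.repr_apply_apply] using b.hasSum_repr ξ) χ
  -- `|bᵢ⟩⟨bᵢ| = |bᵢ⟩⟨Ω| ∘ |Ω⟩⟨bᵢ|` writes each summand as a value of an intertwiner.
  have hterm : ∀ i, Ψ (rankOne ℂ (b i) (b i)) χ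
      = intertwiner Ψ Ω (Ψ (rankOne ℂ Ω (b i)) χ) (b i) := by
    intro i
    rw [intertwiner_apply, ← mul_apply_eq_comp, ← map_mul, ContinuousLinearMap.mul_def,
      rankOne_comp_rankOne, inner_self_eq_norm_sq_to_K, hΩ]
    simp
  have hzero : ∀ i, ⟪χ, Ψ (rankOne ℂ (b i) (b i)) χ⟫_ℂ = 0 := fun i => by
    rw [hterm]; exact inner_eq_zero_symm.mp (hχ _ _)
  have hinner := hsum.mapL (innerSL ℂ χ)
  simp only [innerSL_apply_apply, hzero] at hinner
  rw [← inner_self_eq_zero (𝕜 := ℂ), hinner.unique hasSum_zero]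

theorem eq_zero_of_star_intertwiner_mul_mul_intertwiner_eq_zero (hΨ : IsNormalMapOn Set.univ Ψ)
    (hΩ : ‖Ω‖ = 1) {C : H →L[ℂ] H}
    (hC : ∀ ω ω', star (intertwiner Ψ Ω ω') * C * intertwiner Ψ Ω ω = 0) : C = 0 := by
  have hCv : ∀ ω ξ, C (intertwiner Ψ Ω ω ξ) = 0 := fun ω ξ =>
    eq_zero_of_inner_intertwiner_eq_zero hΨ hΩ fun ω' ξ' => by
      rw [← ContinuousLinearMap.adjoint_inner_right, ← ContinuousLinearMap.star_eq_adjoint,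
        ← mul_apply_eq_comp, ← mul_apply_eq_comp, hC, zero_apply, inner_zero_right]
  have hstar : star C = 0 := by
    ext χ
    refine eq_zero_of_inner_intertwiner_eq_zero hΨ hΩ fun ω ξ => ?_
    rw [ContinuousLinearMap.star_eq_adjoint, ContinuousLinearMap.adjoint_inner_right, hCv,
      inner_zero_left]
  simpa using hstar

theorem IsFactorSet.commute_map {M : VonNeumannAlgebra H}
    (hM : IsFactorSet (M : Set (H →L[ℂ] H))) (hΨ : IsNormalMapOn Set.univ Ψ) (hΩ : ‖Ω‖ = 1)
    {p : H →L[ℂ] H} (hpM : ∀ x ∈ (M : Set (H →L[ℂ] H)), Commute p (Ψ x))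
    (hpM' : ∀ y ∈ Set.centralizer (M : Set (H →L[ℂ] H)), Commute p (Ψ y))
    (S : H →L[ℂ] H) : Commute p (Ψ S) := by
  refine sub_eq_zero.mp (eq_zero_of_star_intertwiner_mul_mul_intertwiner_eq_zero hΨ hΩ ?_)
  intro ω ω'
  -- For the intertwiners `v, v'` of `ω, ω'`, `v'* p v` commutes with `M` and `M'`, so it is a
  -- scalar and `v'* [p, Ψ S] v = [v'* p v, S] = 0`.
  obtain ⟨c, hc⟩ := hM.exists_eq_smul_one
    (fun x hx => commute_star_intertwiner_mul_mul Ψ Ω ω (hpM x hx) ω')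
    (fun y hy => commute_star_intertwiner_mul_mul Ψ Ω ω (hpM' y hy) ω')
  calc star (intertwiner Ψ Ω ω') * (p * Ψ S - Ψ S * p) * intertwiner Ψ Ω ω
      = star (intertwiner Ψ Ω ω') * p * intertwiner Ψ Ω ω * S
        - S * (star (intertwiner Ψ Ω ω') * p * intertwiner Ψ Ω ω) := by
        simp only [mul_sub, sub_mul, mul_assoc, map_mul_intertwiner]
        rw [← mul_assoc _ (Ψ S), star_intertwiner_mul_map]
        simp only [mul_assoc]
    _ = 0 := by rw [hc]; simp

end Intertwiner

section StarMul

variable {R : Type*} [Monoid R] [StarMul R] {u a b : R}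

theorem star_mul_eq_of_star_mul_eq (h : star a * u = u * star b) : star u * a = b * star u := by
  simpa using congrArg star h

theorem commute_mul_star_of_mul_eq (h : a * u = u * b) (h' : star a * u = u * star b) :
    Commute (u * star u) a :=
  calc u * star u * a = u * (b * star u) := by rw [mul_assoc, star_mul_eq_of_star_mul_eq h']
    _ = a * (u * star u) := by rw [← mul_assoc, ← h, mul_assoc]

theorem star_mul_mul_eq_of_star_mul_eq (h : star a * u = u * star b) (hu : star u * u = 1) :
    star u * a * u = b := by
  rw [star_mul_eq_of_star_mul_eq h, mul_assoc, hu, mul_one]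

end StarMul

def compress (Ψ : (H →L[ℂ] H) →⋆ₐ[ℂ] (H →L[ℂ] H)) {u : H →L[ℂ] H} (hu : star u * u = 1)
    (hcomm : ∀ T, Commute (u * star u) (Ψ T)) : (H →L[ℂ] H) →⋆ₐ[ℂ] (H →L[ℂ] H) where
  toFun T := star u * Ψ T * u
  map_one' := by rw [map_one, mul_one, hu]
  map_mul' S T :=
    calc star u * Ψ (S * T) * u = star u * Ψ S * (Ψ T * u * (star u * u)) := by
          rw [hu, mul_one, map_mul]; simp only [mul_assoc]
      _ = star u * Ψ S * ((u * star u) * Ψ T) * u := by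
          rw [(hcomm T).eq]; simp only [mul_assoc]
      _ = star u * Ψ S * u * (star u * Ψ T * u) := by simp only [mul_assoc]
  map_zero' := by simp
  map_add' S T := by simp [mul_add, add_mul]
  commutes' c := by simp [Algebra.algebraMap_eq_smul_one, hu]
  map_star' T := by simp only [map_star Ψ, star_mul, star_star, mul_assoc]

theorem compress_apply (Ψ : (H →L[ℂ] H) →⋆ₐ[ℂ] (H →L[ℂ] H)) {u : H →L[ℂ] H}
    (hu : star u * u = 1) (hcomm : ∀ T, Commute (u * star u) (Ψ T)) (T : H →L[ℂ] H) :
    compress Ψ hu hcomm T = star u * Ψ T * u := rfl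

theorem IsNormalMapOn.compress {Ψ : (H →L[ℂ] H) →⋆ₐ[ℂ] (H →L[ℂ] H)}
    (hΨ : IsNormalMapOn Set.univ Ψ) {u : H →L[ℂ] H} (hu : star u * u = 1)
    (hcomm : ∀ T, Commute (u * star u) (Ψ T)) :
    IsNormalMapOn Set.univ (compress Ψ hu hcomm) := by
  intro ι p q hp hq hproj horth hsum ξ
  simpa [compress_apply] using (hΨ p q hp hq hproj horth hsum (u ξ)).mapL (star u)

theorem IsNormalMapOn.comp {Ψ₁ Ψ₂ : (H →L[ℂ] H) →⋆ₐ[ℂ] (H →L[ℂ] H)}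
    (h₁ : IsNormalMapOn Set.univ Ψ₁) (h₂ : IsNormalMapOn Set.univ Ψ₂) :
    IsNormalMapOn Set.univ (Ψ₁.comp Ψ₂) := by
  intro ι p q _ _ hproj horth hsum
  refine h₁ (fun i => Ψ₂ (p i)) (Ψ₂ q) (fun _ => trivial) trivial
    (fun i => ⟨(hproj i).1.map Ψ₂, by rw [← map_mul, (hproj i).2]⟩)
    (fun i k hik => by rw [← map_mul, horth i k hik, map_zero])
    (h₂ p q (fun _ => trivial) trivial hproj horth hsum)

theorem extendable_iff {M : VonNeumannAlgebra H} {j : (H →L[ℂ] H) → (H →L[ℂ] H)}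
    {θ : (H →L[ℂ] H) → (H →L[ℂ] H)} :
    Extendable M j θ ↔ ∃ Ψ : (H →L[ℂ] H) →⋆ₐ[ℂ] (H →L[ℂ] H), IsNormalMapOn Set.univ Ψ ∧
      (∀ x ∈ M, Ψ x = θ x) ∧ ∀ x ∈ M, Ψ (j x) = j (θ x) := by
  constructor
  · rintro ⟨Θ, hom, unital, normal, onM, onComm⟩
    have hzero : Θ 0 = 0 := by simpa using hom.map_smul 0 0 trivial
    refine ⟨{ toFun := Θ
              map_one' := unital
              map_mul' := fun x y => hom.map_mul x trivial y trivial
              map_zero' := hzero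
              map_add' := fun x y => hom.map_add x trivial y trivial
              commutes' := fun c => by
                simp [Algebra.algebraMap_eq_smul_one, hom.map_smul c 1 trivial, unital]
              map_star' := fun x => hom.map_star x trivial }, normal, onM, onComm⟩
  · rintro ⟨Ψ, normal, onM, onComm⟩
    exact ⟨Ψ, ⟨fun x _ y _ => map_add Ψ x y, fun c x _ => map_smul Ψ c x,
      fun x _ y _ => map_mul Ψ x y, fun x _ => map_star Ψ x⟩, map_one Ψ, normal, onM, onComm⟩

theorem Implements.star_mul_self {M : VonNeumannAlgebra H} {Ω : H}
    {θ : (H →L[ℂ] H) → (H →L[ℂ] H)} {u : H →L[ℂ] H} (hu : Implements M Ω θ u) :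
    star u * u = 1 := by
  rw [ContinuousLinearMap.star_eq_adjoint, ContinuousLinearMap.mul_def]
  exact u.norm_map_iff_adjoint_comp_self.mp hu.1

theorem Implements.map_mul_eq {M : VonNeumannAlgebra H} {Ω : H}
    {θ : (H →L[ℂ] H) → (H →L[ℂ] H)} {u : H →L[ℂ] H} (hu : Implements M Ω θ u)
    (hΩ : Dense {ξ : H | ∃ x ∈ M, x Ω = ξ}) (hθ : IsStarHomOn (M : Set (H →L[ℂ] H)) θ)
    {y : H →L[ℂ] H} (hy : y ∈ M) : θ y * u = u * y := by
  refine DFunLike.coe_injective <| Continuous.ext_on hΩ (map_continuous _) (map_continuous _) ?_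
  rintro _ ⟨x, hx, rfl⟩
  rw [mul_apply_eq_comp, hu.2 x hx, ← mul_apply_eq_comp, ← hθ.map_mul y hy x hx,
    ← hu.2 _ (mul_mem hy hx), mul_apply_eq_comp, mul_apply_eq_comp]

theorem StandardForm.star_j {M : VonNeumannAlgebra H} {Ω : H} {J : H → H}
    {j : (H →L[ℂ] H) → (H →L[ℂ] H)} (hSF : StandardForm M Ω J j) (x : H →L[ℂ] H) :
    star (j x) = j (star x) := by
  rw [ContinuousLinearMap.star_eq_adjoint, eq_comm, ContinuousLinearMap.eq_adjoint_iff]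
  intro ξ η
  calc ⟪j (star x) ξ, η⟫_ℂ = ⟪J η, star x (J ξ)⟫_ℂ := by
        rw [hSF.jdef, ← hSF.Jinner, hSF.Jinvol]
    _ = ⟪x (J η), J ξ⟫_ℂ := by
        rw [ContinuousLinearMap.star_eq_adjoint, ContinuousLinearMap.adjoint_inner_right]
    _ = ⟪ξ, j x η⟫_ℂ := by rw [hSF.jdef, ← hSF.Jinner, hSF.Jinvol]

theorem StandardForm.j_mul_eq_of_mul_eq {M : VonNeumannAlgebra H} {Ω : H} {J : H → H}
    {j : (H →L[ℂ] H) → (H →L[ℂ] H)} (hSF : StandardForm M Ω J j) {u a b : H →L[ℂ] H}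
    (huJ : CommutesWithJ J u) (h : a * u = u * b) : j a * u = u * j b := by
  ext ξ
  simp only [mul_apply_eq_comp, hSF.jdef]
  rw [← huJ, ← mul_apply_eq_comp a, h, mul_apply_eq_comp, huJ]

theorem extendable_of_eqOn_id {M : VonNeumannAlgebra H} {j : (H →L[ℂ] H) → (H →L[ℂ] H)}
    {θ : (H →L[ℂ] H) → (H →L[ℂ] H)} (h : ∀ x ∈ M, θ x = x) : Extendable M j θ :=
  extendable_iff.mpr ⟨StarAlgHom.id ℂ _, fun _ _ _ _ _ _ hsum => hsum,
    fun x hx => (h x hx).symm, fun x hx => by rw [h x hx]; rfl⟩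

theorem Extendable.comp {M : VonNeumannAlgebra H} {j : (H →L[ℂ] H) → (H →L[ℂ] H)}
    {θ₁ θ₂ σ : (H →L[ℂ] H) → (H →L[ℂ] H)} (h₁ : Extendable M j θ₁) (h₂ : Extendable M j θ₂)
    (hθ₂ : Set.MapsTo θ₂ (M : Set (H →L[ℂ] H)) (M : Set (H →L[ℂ] H)))
    (hσ : ∀ x ∈ M, θ₁ (θ₂ x) = σ x) : Extendable M j σ := by
  obtain ⟨Ψ₁, hΨ₁, onM₁, onComm₁⟩ := extendable_iff.mp h₁
  obtain ⟨Ψ₂, hΨ₂, onM₂, onComm₂⟩ := extendable_iff.mp h₂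
  refine extendable_iff.mpr ⟨Ψ₁.comp Ψ₂, hΨ₁.comp hΨ₂, fun x hx => ?_, fun x hx => ?_⟩
  · rw [StarAlgHom.comp_apply, onM₂ x hx, onM₁ _ (hθ₂ hx), hσ x hx]
  · rw [StarAlgHom.comp_apply, onComm₂ x hx, onComm₁ _ (hθ₂ hx), hσ x hx]

theorem Extendable.of_comp {M : VonNeumannAlgebra H} {Ω : H} {J : H → H}
    {j : (H →L[ℂ] H) → (H →L[ℂ] H)} (hSF : StandardForm M Ω J j)
    (hM : IsFactorSet (M : Set (H →L[ℂ] H))) {θ σ τ : (H →L[ℂ] H) → (H →L[ℂ] H)}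
    (hτ : Extendable M j τ) (hθ : IsStarHomOn (M : Set (H →L[ℂ] H)) θ)
    (he : EquiModular M Ω J θ)
    (hσ : Set.MapsTo σ (M : Set (H →L[ℂ] H)) (M : Set (H →L[ℂ] H)))
    (hcomp : ∀ x ∈ M, θ (σ x) = τ x) : Extendable M j σ := by
  obtain ⟨Ψ, hΨ, onM, onComm⟩ := extendable_iff.mp hτ
  obtain ⟨u, hu, huJ⟩ := he
  have huu := hu.star_mul_self
  have hθu : ∀ y ∈ M, θ y * u = u * y := fun y hy => hu.map_mul_eq hSF.cyclic hθ hy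
  have hθu' : ∀ y ∈ M, star (θ y) * u = u * star y := fun y hy => by
    rw [← hθ.map_star y hy]; exact hθu _ (star_mem hy)
  have hjθu : ∀ y ∈ M, j (θ y) * u = u * j y := fun y hy =>
    hSF.j_mul_eq_of_mul_eq huJ (hθu y hy)
  have hjθu' : ∀ y ∈ M, star (j (θ y)) * u = u * star (j y) := fun y hy => by
    rw [hSF.star_j, hSF.star_j, ← hθ.map_star y hy]; exact hjθu _ (star_mem hy)
  have hcomm : ∀ T, Commute (u * star u) (Ψ T) := by
    refine hM.commute_map hΨ hSF.unit (fun x hx => ?_) (fun y hy => ?_)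
    · rw [onM x hx, ← hcomp x hx]
      exact commute_mul_star_of_mul_eq (hθu _ (hσ hx)) (hθu' _ (hσ hx))
    · obtain ⟨x, hx, rfl⟩ := hSF.jsurj y hy
      rw [onComm x hx, ← hcomp x hx]
      exact commute_mul_star_of_mul_eq (hjθu _ (hσ hx)) (hjθu' _ (hσ hx))
  refine extendable_iff.mpr ⟨compress Ψ huu hcomm, hΨ.compress huu hcomm, fun x hx => ?_,
    fun x hx => ?_⟩
  · rw [compress_apply, onM x hx, ← hcomp x hx]
    exact star_mul_mul_eq_of_star_mul_eq (hθu' _ (hσ hx)) huu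
  · rw [compress_apply, onComm x hx, ← hcomp x hx]
    exact star_mul_mul_eq_of_star_mul_eq (hjθu' _ (hσ hx)) huu

namespace IsE0Semigroup

variable {M : VonNeumannAlgebra H} {Ω : H} {α : ℝ → (H →L[ℂ] H) → (H →L[ℂ] H)}
  {j : (H →L[ℂ] H) → (H →L[ℂ] H)}

theorem extendable_of_le {J : H → H} (hα : IsE0Semigroup M Ω α) (hSF : StandardForm M Ω J j)
    (hM : IsFactorSet (M : Set (H →L[ℂ] H)))
    (hequi : ∀ t : ℝ, 0 ≤ t → EquiModular M Ω J (α t)) {s t : ℝ} (hs : 0 ≤ s) (hst : s ≤ t)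
    (ht : Extendable M j (α t)) : Extendable M j (α s) :=
  ht.of_comp hSF hM (hα.endo _ (sub_nonneg.2 hst)).hom (hequi _ (sub_nonneg.2 hst))
    (hα.endo s hs).mapsTo fun x hx => by
      rw [hα.semigroup _ _ (sub_nonneg.2 hst) hs x hx, sub_add_cancel]

theorem extendable_nat_mul (hα : IsE0Semigroup M Ω α) {t : ℝ} (ht : 0 ≤ t)
    (hext : Extendable M j (α t)) (n : ℕ) : Extendable M j (α (n * t)) := by
  induction n with
  | zero => simpa using extendable_of_eqOn_id hα.id0
  | succ n ih =>
    refine ih.comp hext (hα.endo t ht).mapsTo fun x hx => ?_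
    rw [hα.semigroup _ _ (by positivity) ht x hx]
    push_cast
    ring_nf

end IsE0Semigroup

/-- **Remark 5.5.**  Let `α = {α_t}` be an `E₀`-semigroup on the factorial probability space
`(M, φ)` in standard form, with each `α_t` equi-modular.  If `α_t` is extendable for some
`t > 0`, then `α_s` is extendable for all `0 ≤ s < t`; consequently the whole `E₀`-semigroup
`α` is extendable (every `α_s`, `s ≥ 0`, is extendable). -/
theorem remark_5_5
    (M : VonNeumannAlgebra H) (Ω : H) (J : H → H) (j : (H →L[ℂ] H) → (H →L[ℂ] H))
    (hSF : StandardForm M Ω J j) (hM : IsFactorSet (M : Set (H →L[ℂ] H)))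
    (α : ℝ → (H →L[ℂ] H) → (H →L[ℂ] H))
    (hα : IsE0Semigroup M Ω α)
    (hequi : ∀ t : ℝ, 0 ≤ t → EquiModular M Ω J (α t)) :
    ∀ t : ℝ, 0 < t → Extendable M j (α t) →
      (∀ s : ℝ, 0 ≤ s → s < t → Extendable M j (α s)) ∧
      ∀ s : ℝ, 0 ≤ s → Extendable M j (α s) := by
  intro t ht hext
  refine ⟨fun s hs hst => hα.extendable_of_le hSF hM hequi hs hst.le hext, fun s hs => ?_⟩
  obtain ⟨n, hn⟩ := exists_nat_ge (s / t)
  exact hα.extendable_of_le hSF hM hequi hs ((div_le_iff₀ ht).mp hn)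
    (hα.extendable_nat_mul ht.le hext n)

end Paper
end
end

section
/- Let α = {α_t : t ≥ 0} be an extendable E₀-semigroup on a factorial non-commutative probability space (M,φ) with φ faithful, each α_t equi-modular, and let α⁽²⁾ be its extension to B(L²(M,φ)). For t > 0 set H(t) = E^{α_t} ∩ E^{α′_t}, where E^{α_t} = {T ∈ B(L²(M,φ)) : α_t(x)T = Tx for all x ∈ M} and E^{α′_t} = {T ∈ B(L²(M,φ)) : α′_t(x′)T = Tx′ for all x′ ∈ M′}. Then H(t) coincides with the intertwiner space E(t) = {T ∈ B(L²(M,φ)) : α⁽²⁾_t(x)T = Tx for all x ∈ B(L²(M,φ))}, and H = {(t,T) : t ∈ (0,∞), T ∈ H(t)} is a product system (in the sense of Arveson) with unitary multiplication maps u_{st} : H(t) ⊗ H(s) → H(s+t), u_{st}(T ⊗ S) = TS. -/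
set_option synthInstance.maxHeartbeats 400000
set_option maxHeartbeats 1000000
set_option linter.unusedSectionVars false
open scoped InnerProductSpace ComplexConjugate
noncomputable section
namespace Paper
variable {H : Type} [NormedAddCommGroup H] [InnerProductSpace ℂ H] [CompleteSpace H]
variable {H' : Type} [NormedAddCommGroup H'] [InnerProductSpace ℂ H'] [CompleteSpace H']

/-- rank one operator `|a⟩⟨b|`. -/
def rankOne (a b : H) : H →L[ℂ] H := (innerSL ℂ b).smulRight a

@[simp] lemma rankOne_apply (a b ξ : H) : rankOne a b ξ = ⟪b, ξ⟫_ℂ • a := rfl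

lemma rankOne_mul_rankOne (a b c d : H) :
    rankOne a b * rankOne c d = ⟪b, c⟫_ℂ • rankOne a d := by
  ext ξ
  simp [ContinuousLinearMap.mul_apply, inner_smul_right, mul_smul, smul_comm (⟪d, ξ⟫_ℂ)]

lemma mul_rankOne (x : H →L[ℂ] H) (a b : H) : x * rankOne a b = rankOne (x a) b := by
  ext ξ; simp [ContinuousLinearMap.mul_apply]

lemma star_rankOne (a b : H) : star (rankOne a b) = rankOne b a := by
  rw [ContinuousLinearMap.star_eq_adjoint]
  have := (ContinuousLinearMap.eq_adjoint_iff (rankOne b a) (rankOne a b)).mpr ?_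
  · exact this.symm
  · intro x y
    simp only [rankOne_apply, inner_smul_left, inner_smul_right]
    rw [inner_conj_symm]
    ring

lemma rankOne_add_left (a a' b : H) : rankOne (a + a') b = rankOne a b + rankOne a' b := by
  ext ξ; simp

lemma rankOne_smul_left (c : ℂ) (a b : H) : rankOne (c • a) b = c • rankOne a b := by
  ext ξ
  simp only [rankOne_apply, ContinuousLinearMap.coe_smul', Pi.smul_apply]
  rw [smul_comm]


/-- An `E₀`-semigroup on the von Neumann probability space `(S, ⟨·Ω,Ω⟩)`, where `S` is the
underlying set of a von Neumann algebra acting on `H`. -/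
structure IsE0SemigroupSet (S : Set (H →L[ℂ] H)) (Ω : H)
    (α : ℝ → (H →L[ℂ] H) → (H →L[ℂ] H)) : Prop where
  mapsTo : ∀ t : ℝ, 0 ≤ t → Set.MapsTo (α t) S S
  unital : ∀ t : ℝ, 0 ≤ t → α t 1 = 1
  hom : ∀ t : ℝ, 0 ≤ t → IsStarHomOn S (α t)
  normal : ∀ t : ℝ, 0 ≤ t → IsNormalMapOn S (α t)
  state : ∀ t : ℝ, 0 ≤ t → ∀ x ∈ S, ⟪α t x Ω, Ω⟫_ℂ = ⟪x Ω, Ω⟫_ℂ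
  id0 : ∀ x ∈ S, α 0 x = x
  semigroup : ∀ s t : ℝ, 0 ≤ s → 0 ≤ t → ∀ x ∈ S, α s (α t x) = α (s + t) x
  weakCont : ∀ x ∈ S, ∀ ξ η : H, ContinuousOn (fun t : ℝ => ⟪α t x ξ, η⟫_ℂ) (Set.Ici 0)

/-- **Proposition 5.6.**  Let `α` be an extendable `E₀`-semigroup on the factorial probability
space `(M, φ)` in standard form, with extension `α⁽²⁾ = β` to `B(L²(M,φ))`.  For `t > 0` let
`H(t) = E^{α_t} ∩ E^{α′_t}` and let `E(t)` be the intertwiner space of `α⁽²⁾_t`.  Then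
`H(t) = E(t)`, and `H = {(t,T) : t > 0, T ∈ H(t)}` is a product system: each `H(t)` carries the
Hilbert space structure `T* S = ⟨S,T⟩ 1`, multiplication maps `H(t) × H(s)` into `H(s+t)`, and
the induced maps `u_{st} : H(t) ⊗ H(s) → H(s+t)`, `T ⊗ S ↦ TS`, are unitary. -/
theorem proposition_5_6
    (M : VonNeumannAlgebra H) (Ω : H) (J : H → H) (j : (H →L[ℂ] H) → (H →L[ℂ] H))
    (hSF : StandardForm M Ω J j) (hM : IsFactorSet (M : Set (H →L[ℂ] H)))
    (α : ℝ → (H →L[ℂ] H) → (H →L[ℂ] H))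
    (hα : IsE0SemigroupSet (M : Set (H →L[ℂ] H)) Ω α)
    (hext : ∀ t : ℝ, 0 ≤ t → EquiModular M Ω J (α t) ∧ Extendable M j (α t))
    -- `β = α⁽²⁾` is the extended `E₀`-semigroup on `B(L²(M,φ))`:
    (β : ℝ → (H →L[ℂ] H) → (H →L[ℂ] H))
    (hβ : IsE0SemigroupSet (Set.univ : Set (H →L[ℂ] H)) Ω β)
    (hβext : ∀ t : ℝ, 0 ≤ t → ∀ x ∈ M, ∀ y ∈ Set.centralizer (M : Set (H →L[ℂ] H)),
      β t (x * y) = α t x * j (α t (j y))) :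
    letI Hs : ℝ → Set (H →L[ℂ] H) := fun t =>
      {T | ∀ x ∈ M, α t x * T = T * x} ∩
      {T | ∀ y ∈ Set.centralizer (M : Set (H →L[ℂ] H)), j (α t (j y)) * T = T * y}
    -- `H(t)` coincides with the intertwiner space `E(t)` of `α⁽²⁾`:
    (∀ t : ℝ, 0 < t → Hs t = {T | ∀ x : H →L[ℂ] H, β t x * T = T * x}) ∧
    -- `H(t)` is a Hilbert space with inner product given by `T* S = ⟨S,T⟩1`:
    (∀ t : ℝ, 0 < t → ∀ T ∈ Hs t, ∀ S ∈ Hs t, ∃ c : ℂ, star T * S = c • (1 : H →L[ℂ] H)) ∧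
    -- multiplication maps `H(t) × H(s)` to `H(s+t)` ...
    (∀ s t : ℝ, 0 < s → 0 < t → ∀ T ∈ Hs t, ∀ S ∈ Hs s, T * S ∈ Hs (s + t)) ∧
    -- ... and `u_{st}(T ⊗ S) = TS` is unitary onto `H(s+t)` (inner products multiply by the
    -- previous two clauses; surjectivity is totality of the products in `H(s+t)`):
    (∀ s t : ℝ, 0 < s → 0 < t →
      Hs (s + t) ⊆
        closure (Submodule.span ℂ
          {W : H →L[ℂ] H | ∃ T ∈ Hs t, ∃ S ∈ Hs s, T * S = W} : Set (H →L[ℂ] H))) := by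
  classical
  -- ## Preliminaries
  have hΩn : ‖Ω‖ = 1 := hSF.unit
  have hΩ1 : ⟪Ω, Ω⟫_ℂ = 1 := by
    rw [inner_self_eq_norm_sq_to_K, hΩn]; norm_num
  haveI : Nontrivial H := by
    refine nontrivial_of_ne Ω 0 fun h => ?_
    rw [h, norm_zero] at hΩn; norm_num at hΩn
  have j_one : j (1 : H →L[ℂ] H) = 1 := by
    ext ξ
    rw [hSF.jdef]
    simp only [ContinuousLinearMap.one_apply]
    exact hSF.Jinvol ξ
  have jj : ∀ z : H →L[ℂ] H, j (j z) = z := by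
    intro z; ext ξ
    rw [hSF.jdef, hSF.jdef, hSF.Jinvol, hSF.Jinvol]
  have j_mem_M : ∀ y ∈ Set.centralizer (M : Set (H →L[ℂ] H)), j y ∈ (M : Set (H →L[ℂ] H)) := by
    intro y hy
    obtain ⟨x, hx, hxy⟩ := hSF.jsurj y hy
    rw [← hxy, jj]; exact hx
  have cstar_mem : ∀ y ∈ Set.centralizer (M : Set (H →L[ℂ] H)),
      star y ∈ Set.centralizer (M : Set (H →L[ℂ] H)) := by
    intro y hy m hm
    have h1 : y * star m = star m * y := (hy (star m) (star_mem hm)).symm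
    calc m * star y = star (y * star m) := by rw [star_mul, star_star]
      _ = star (star m * y) := by rw [h1]
      _ = star y * m := by rw [star_mul, star_star]
  have one_mem_c : (1 : H →L[ℂ] H) ∈ Set.centralizer (M : Set (H →L[ℂ] H)) :=
    fun m _ => by rw [mul_one, one_mul]
  have A1 : ∀ t : ℝ, 0 ≤ t → ∀ x ∈ (M : Set (H →L[ℂ] H)), β t x = α t x := by
    intro t ht x hx
    have h := hβext t ht x hx 1 one_mem_c
    rwa [mul_one, j_one, hα.unital t ht, j_one, mul_one] at h
  have A2 : ∀ t : ℝ, 0 ≤ t → ∀ y ∈ Set.centralizer (M : Set (H →L[ℂ] H)),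
      β t y = j (α t (j y)) := by
    intro t ht y hy
    have h := hβext t ht 1 (one_mem M) y hy
    rwa [one_mul, hα.unital t ht, one_mul] at h
  -- β is a star-homomorphism on everything
  have Bmul : ∀ t : ℝ, 0 ≤ t → ∀ x y : H →L[ℂ] H, β t (x * y) = β t x * β t y :=
    fun t ht x y => (hβ.hom t ht).map_mul x (Set.mem_univ x) y (Set.mem_univ y)
  have Bstar : ∀ t : ℝ, 0 ≤ t → ∀ x : H →L[ℂ] H, β t (star x) = star (β t x) :=
    fun t ht x => (hβ.hom t ht).map_star x (Set.mem_univ x)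
  have Badd : ∀ t : ℝ, 0 ≤ t → ∀ x y : H →L[ℂ] H, β t (x + y) = β t x + β t y :=
    fun t ht x y => (hβ.hom t ht).map_add x (Set.mem_univ x) y (Set.mem_univ y)
  have Bsmul : ∀ t : ℝ, 0 ≤ t → ∀ (c : ℂ) (x : H →L[ℂ] H), β t (c • x) = c • β t x :=
    fun t ht c x => (hβ.hom t ht).map_smul c x (Set.mem_univ x)
  -- generic projection facts
  have sq_le : ∀ a c : ℝ, 0 ≤ a → 0 ≤ c → a * a ≤ c * c → a ≤ c := by
    intro a c ha hc h
    by_contra hlt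
    push_neg at hlt
    nlinarith
  have sq_eq : ∀ a c : ℝ, 0 ≤ a → 0 ≤ c → a * a = c * c → a = c := by
    intro a c ha hc h
    exact le_antisymm (sq_le a c ha hc h.le) (sq_le c a hc ha h.ge)
  have Csq : ∀ v : H, ⟪v, v⟫_ℂ = ((‖v‖ ^ 2 : ℝ) : ℂ) := by
    intro v
    rw [inner_self_eq_norm_sq_to_K]
    norm_cast
  have proj_normsq : ∀ P : H →L[ℂ] H, star P = P → P * P = P →
      ∀ χ : H, ⟪P χ, χ⟫_ℂ = ((‖P χ‖ ^ 2 : ℝ) : ℂ) := by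
    intro P hsa hid χ
    have h1 : ⟪P χ, P χ⟫_ℂ = ⟪P χ, χ⟫_ℂ := by
      rw [← ContinuousLinearMap.adjoint_inner_left P χ (P χ), ← ContinuousLinearMap.star_eq_adjoint,
        ← ContinuousLinearMap.mul_apply, hsa, hid]
    rw [← h1, Csq]
  have proj_contr : ∀ P : H →L[ℂ] H, star P = P → P * P = P →
      ∀ χ : H, ‖P χ‖ ≤ ‖χ‖ := by
    intro P hsa hid χ
    have h1 := proj_normsq P hsa hid χ
    have h2 : (‖P χ‖ ^ 2 : ℝ) ≤ ‖P χ‖ * ‖χ‖ := by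
      have h3 := re_inner_le_norm (𝕜 := ℂ) (P χ) χ
      rw [h1] at h3
      simpa [RCLike.re_to_complex, ← Complex.ofReal_pow] using h3
    nlinarith [norm_nonneg (P χ), norm_nonneg χ]
  -- norm bound for β of rank-one operators
  have Bnorm : ∀ t : ℝ, 0 ≤ t → ∀ γ ζ : H, ‖β t (rankOne γ Ω) ζ‖ ≤ ‖γ‖ * ‖ζ‖ := by
    intro t ht γ ζ
    have hPsa : star (β t (rankOne Ω Ω)) = β t (rankOne Ω Ω) := by
      rw [← Bstar t ht, star_rankOne]
    have hPid : β t (rankOne Ω Ω) * β t (rankOne Ω Ω) = β t (rankOne Ω Ω) := by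
      rw [← Bmul t ht, rankOne_mul_rankOne, hΩ1, one_smul]
    have hsq : ⟪β t (rankOne γ Ω) ζ, β t (rankOne γ Ω) ζ⟫_ℂ
        = ⟪γ, γ⟫_ℂ * ⟪β t (rankOne Ω Ω) ζ, ζ⟫_ℂ := by
      calc ⟪β t (rankOne γ Ω) ζ, β t (rankOne γ Ω) ζ⟫_ℂ
          = ⟪(star (β t (rankOne γ Ω)) * β t (rankOne γ Ω)) ζ, ζ⟫_ℂ := by
            rw [ContinuousLinearMap.mul_apply, ContinuousLinearMap.star_eq_adjoint,
              ContinuousLinearMap.adjoint_inner_left]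
        _ = ⟪β t (⟪γ, γ⟫_ℂ • rankOne Ω Ω) ζ, ζ⟫_ℂ := by
            rw [← Bstar t ht, ← Bmul t ht, star_rankOne, rankOne_mul_rankOne]
        _ = ⟪γ, γ⟫_ℂ * ⟪β t (rankOne Ω Ω) ζ, ζ⟫_ℂ := by
            rw [Bsmul t ht, ContinuousLinearMap.smul_apply, inner_smul_left, inner_conj_symm]
    have hsq' : ‖β t (rankOne γ Ω) ζ‖ ^ 2 = ‖γ‖ ^ 2 * ‖β t (rankOne Ω Ω) ζ‖ ^ 2 := by
      rw [Csq, Csq, proj_normsq _ hPsa hPid ζ] at hsq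
      exact_mod_cast hsq
    have hcontr := proj_contr _ hPsa hPid ζ
    refine sq_le _ _ (norm_nonneg _) (mul_nonneg (norm_nonneg _) (norm_nonneg _)) ?_
    calc ‖β t (rankOne γ Ω) ζ‖ * ‖β t (rankOne γ Ω) ζ‖
        = ‖γ‖ ^ 2 * ‖β t (rankOne Ω Ω) ζ‖ ^ 2 := by rw [← pow_two]; exact hsq'
      _ ≤ ‖γ‖ ^ 2 * ‖ζ‖ ^ 2 := by gcongr
      _ = (‖γ‖ * ‖ζ‖) * (‖γ‖ * ‖ζ‖) := by ring
  -- operators commuting with M and M' are scalars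
  have comm_scalar : ∀ R : H →L[ℂ] H,
      (∀ x ∈ (M : Set (H →L[ℂ] H)), x * R = R * x) →
      (∀ y ∈ Set.centralizer (M : Set (H →L[ℂ] H)), y * R = R * y) →
      ∃ c : ℂ, R = c • 1 := by
    intro R hc1 hc2
    have hRM' : R ∈ Set.centralizer (M : Set (H →L[ℂ] H)) := fun m hm => hc1 m hm
    have hRM : R ∈ (M : Set (H →L[ℂ] H)) := by
      rw [← M.centralizer_centralizer]
      exact fun y hy => hc2 y hy
    exact hM R hRM fun y hy => (hRM' y hy).symm
  -- star-intertwining relations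
  have starT_comm : ∀ r : ℝ, 0 ≤ r → ∀ T : H →L[ℂ] H,
      (∀ x ∈ (M : Set (H →L[ℂ] H)), β r x * T = T * x) →
      (∀ y ∈ Set.centralizer (M : Set (H →L[ℂ] H)), β r y * T = T * y) →
      (∀ x ∈ (M : Set (H →L[ℂ] H)), star T * β r x = x * star T) ∧
      (∀ y ∈ Set.centralizer (M : Set (H →L[ℂ] H)), star T * β r y = y * star T) := by
    intro r hr T h1 h2
    constructor
    · intro x hx
      have h := congrArg star (h1 (star x) (star_mem hx))
      rwa [star_mul, star_mul, star_star, Bstar r hr x, star_star] at h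
    · intro y hy
      have h := congrArg star (h2 (star y) (cstar_mem y hy))
      rwa [star_mul, star_mul, star_star, Bstar r hr y, star_star] at h
  -- conversion from α-intertwiners (membership in H(t)) to β-intertwiners
  have toB : ∀ r : ℝ, 0 ≤ r → ∀ T : H →L[ℂ] H,
      (∀ x ∈ (M : Set (H →L[ℂ] H)), α r x * T = T * x) →
      (∀ y ∈ Set.centralizer (M : Set (H →L[ℂ] H)), j (α r (j y)) * T = T * y) →
      (∀ x ∈ (M : Set (H →L[ℂ] H)), β r x * T = T * x) ∧
      (∀ y ∈ Set.centralizer (M : Set (H →L[ℂ] H)), β r y * T = T * y) :=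
    fun r hr T h1 h2 =>
      ⟨fun x hx => by rw [A1 r hr x hx]; exact h1 x hx,
       fun y hy => by rw [A2 r hr y hy]; exact h2 y hy⟩
  -- the fundamental scalar identity
  have Rscalar : ∀ r : ℝ, 0 ≤ r → ∀ T : H →L[ℂ] H,
      (∀ x ∈ (M : Set (H →L[ℂ] H)), β r x * T = T * x) →
      (∀ y ∈ Set.centralizer (M : Set (H →L[ℂ] H)), β r y * T = T * y) →
      ∀ ζ γ : H, star T (β r (rankOne γ Ω) ζ)
        = ⟪β r (rankOne Ω Ω) (T Ω), ζ⟫_ℂ • γ := by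
    intro r hr T h1 h2 ζ
    obtain ⟨hs1, hs2⟩ := starT_comm r hr T h1 h2
    have hadd : ∀ γ γ' : H, star T (β r (rankOne (γ + γ') Ω) ζ)
        = star T (β r (rankOne γ Ω) ζ) + star T (β r (rankOne γ' Ω) ζ) := by
      intro γ γ'
      rw [rankOne_add_left, Badd r hr, ContinuousLinearMap.add_apply, map_add]
    have hsmul : ∀ (c : ℂ) (γ : H), star T (β r (rankOne (c • γ) Ω) ζ)
        = c • star T (β r (rankOne γ Ω) ζ) := by
      intro c γ
      rw [rankOne_smul_left, Bsmul r hr, ContinuousLinearMap.smul_apply, map_smul]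
    set Rlin : H →ₗ[ℂ] H :=
      { toFun := fun γ => star T (β r (rankOne γ Ω) ζ)
        map_add' := hadd
        map_smul' := hsmul } with hRlin
    have hbound : ∀ γ : H, ‖Rlin γ‖ ≤ (‖star T‖ * ‖ζ‖) * ‖γ‖ := by
      intro γ
      calc ‖star T (β r (rankOne γ Ω) ζ)‖ ≤ ‖star T‖ * ‖β r (rankOne γ Ω) ζ‖ :=
            (star T).le_opNorm _
        _ ≤ ‖star T‖ * (‖γ‖ * ‖ζ‖) := by
            gcongr
            exact Bnorm r hr γ ζ
        _ = (‖star T‖ * ‖ζ‖) * ‖γ‖ := by ring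
    set R : H →L[ℂ] H := Rlin.mkContinuous _ hbound with hRdef
    have hRapp : ∀ γ : H, R γ = star T (β r (rankOne γ Ω) ζ) := fun γ => rfl
    have hcomm1 : ∀ x ∈ (M : Set (H →L[ℂ] H)), x * R = R * x := by
      intro x hx
      ext γ
      rw [ContinuousLinearMap.mul_apply, ContinuousLinearMap.mul_apply, hRapp, hRapp]
      have h := congrArg (fun A : H →L[ℂ] H => A (β r (rankOne γ Ω) ζ)) (hs1 x hx)
      simp only [ContinuousLinearMap.mul_apply] at h
      rw [← mul_rankOne, Bmul r hr, ContinuousLinearMap.mul_apply, h]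
    have hcomm2 : ∀ y ∈ Set.centralizer (M : Set (H →L[ℂ] H)), y * R = R * y := by
      intro y hy
      ext γ
      rw [ContinuousLinearMap.mul_apply, ContinuousLinearMap.mul_apply, hRapp, hRapp]
      have h := congrArg (fun A : H →L[ℂ] H => A (β r (rankOne γ Ω) ζ)) (hs2 y hy)
      simp only [ContinuousLinearMap.mul_apply] at h
      rw [← mul_rankOne, Bmul r hr, ContinuousLinearMap.mul_apply, h]
    obtain ⟨c, hc⟩ := comm_scalar R hcomm1 hcomm2
    have hcval : c = ⟪β r (rankOne Ω Ω) (T Ω), ζ⟫_ℂ := by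
      have h0 : star T (β r (rankOne Ω Ω) ζ) = c • Ω := by
        rw [← hRapp, hc, ContinuousLinearMap.smul_apply, ContinuousLinearMap.one_apply]
      calc c = ⟪Ω, star T (β r (rankOne Ω Ω) ζ)⟫_ℂ := by
            rw [h0, inner_smul_right, hΩ1, mul_one]
        _ = ⟪T Ω, β r (rankOne Ω Ω) ζ⟫_ℂ := by
            rw [ContinuousLinearMap.star_eq_adjoint, ContinuousLinearMap.adjoint_inner_right]
        _ = ⟪β r (rankOne Ω Ω) (T Ω), ζ⟫_ℂ := by
            have hPsa : star (β r (rankOne Ω Ω)) = β r (rankOne Ω Ω) := by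
              rw [← Bstar r hr, star_rankOne]
            conv_rhs => rw [show β r (rankOne Ω Ω) (T Ω)
              = ContinuousLinearMap.adjoint (β r (rankOne Ω Ω)) (T Ω) by
                rw [← ContinuousLinearMap.star_eq_adjoint, hPsa]]
            rw [ContinuousLinearMap.adjoint_inner_left]
    intro γ
    rw [← hRapp, hc, ContinuousLinearMap.smul_apply, ContinuousLinearMap.one_apply, hcval]
  -- the canonical operators built from vectors
  have Lop : ∀ r : ℝ, 0 ≤ r → ∀ χ : H, ∃ L : H →L[ℂ] H,
      ∀ γ : H, L γ = β r (rankOne γ Ω) χ := by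
    intro r hr χ
    have hadd : ∀ γ γ' : H, β r (rankOne (γ + γ') Ω) χ
        = β r (rankOne γ Ω) χ + β r (rankOne γ' Ω) χ := by
      intro γ γ'
      rw [rankOne_add_left, Badd r hr, ContinuousLinearMap.add_apply]
    have hsmul : ∀ (c : ℂ) (γ : H), β r (rankOne (c • γ) Ω) χ
        = c • β r (rankOne γ Ω) χ := by
      intro c γ
      rw [rankOne_smul_left, Bsmul r hr, ContinuousLinearMap.smul_apply]
    refine ⟨LinearMap.mkContinuous
      { toFun := fun γ => β r (rankOne γ Ω) χ
        map_add' := hadd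
        map_smul' := hsmul } (‖χ‖) ?_, fun γ => rfl⟩
    intro γ
    calc ‖β r (rankOne γ Ω) χ‖ ≤ ‖γ‖ * ‖χ‖ := Bnorm r hr γ χ
      _ = ‖χ‖ * ‖γ‖ := by ring
  -- the operator identity : β r (rankOne Ω γ) ∘ T = rankOne (β r (rankOne Ω Ω) (T Ω)) γ
  have sstarT : ∀ r : ℝ, 0 ≤ r → ∀ T : H →L[ℂ] H,
      (∀ x ∈ (M : Set (H →L[ℂ] H)), β r x * T = T * x) →
      (∀ y ∈ Set.centralizer (M : Set (H →L[ℂ] H)), β r y * T = T * y) →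
      ∀ γ : H, β r (rankOne Ω γ) * T = rankOne (β r (rankOne Ω Ω) (T Ω)) γ := by
    intro r hr T h1 h2 γ
    have h : star T * β r (rankOne γ Ω) = rankOne γ (β r (rankOne Ω Ω) (T Ω)) := by
      ext ζ
      rw [ContinuousLinearMap.mul_apply, Rscalar r hr T h1 h2 ζ γ, rankOne_apply]
    have h2' := congrArg star h
    rwa [star_mul, star_star, ← Bstar r hr, star_rankOne, star_rankOne] at h2'
  -- a Hilbert basis of H and complete additivity of β
  obtain ⟨w, b, hbcoe⟩ := exists_hilbertBasis ℂ H
  have bnorm1 : ∀ i : w, ⟪(b i : H), (b i : H)⟫_ℂ = 1 := by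
    intro i
    rw [Csq, b.orthonormal.1 i]
    norm_num
  have borth : ∀ i k : w, i ≠ k → ⟪(b i : H), (b k : H)⟫_ℂ = 0 :=
    fun i k h => b.orthonormal.2 h
  have btot : ∀ ξ : H, HasSum (fun i : w => rankOne (b i) (b i) ξ) ξ := by
    intro ξ
    have h := b.hasSum_repr ξ
    simp only [b.repr_apply_apply] at h
    simpa only [rankOne_apply] using h
  have Bsum : ∀ r : ℝ, 0 ≤ r → ∀ ζ : H,
      HasSum (fun i : w => β r (rankOne (b i) (b i)) ζ) ζ := by
    intro r hr ζ
    have h := hβ.normal r hr (fun i : w => rankOne (b i) (b i)) 1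
      (fun _ => Set.mem_univ _) (Set.mem_univ _)
      (fun i => ⟨star_rankOne _ _, by rw [rankOne_mul_rankOne, bnorm1 i, one_smul]⟩)
      (fun i k hik => by rw [rankOne_mul_rankOne, borth i k hik, zero_smul])
      (fun ξ => by simpa only [ContinuousLinearMap.one_apply] using btot ξ) ζ
    rwa [hβ.unital r hr, ContinuousLinearMap.one_apply] at h
  -- THE KEY LEMMA : every two-sided intertwiner is of the canonical form
  have key : ∀ r : ℝ, 0 ≤ r → ∀ T : H →L[ℂ] H,
      (∀ x ∈ (M : Set (H →L[ℂ] H)), β r x * T = T * x) →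
      (∀ y ∈ Set.centralizer (M : Set (H →L[ℂ] H)), β r y * T = T * y) →
      ∀ ξ : H, T ξ = β r (rankOne ξ Ω) (T Ω) := by
    intro r hr T h1 h2 ξ
    obtain ⟨L, hLapp⟩ := Lop r hr (T Ω)
    -- each projection term
    have hterm : ∀ i : w, β r (rankOne (b i) (b i)) (T ξ)
        = ⟪(b i : H), ξ⟫_ℂ • L (b i) := by
      intro i
      have hsplit : rankOne ((b i : H)) (b i) = rankOne (b i) Ω * rankOne Ω (b i) := by
        rw [rankOne_mul_rankOne, hΩ1, one_smul]
      rw [hsplit, Bmul r hr, ContinuousLinearMap.mul_apply]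
      have h := congrArg (fun A : H →L[ℂ] H => A ξ) (sstarT r hr T h1 h2 (b i))
      simp only [ContinuousLinearMap.mul_apply, rankOne_apply] at h
      rw [h, map_smul, hLapp]
      congr 1
      rw [← ContinuousLinearMap.mul_apply, ← Bmul r hr, rankOne_mul_rankOne, hΩ1, one_smul]
    have hsum1 := Bsum r hr (T ξ)
    simp only [hterm] at hsum1
    have hsum3 : HasSum (fun i : w => ⟪(b i : H), ξ⟫_ℂ • (b i : H)) ξ := by
      have h := b.hasSum_repr ξ
      simpa only [b.repr_apply_apply] using h
    have hsum4 := hsum3.mapL L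
    simp only [map_smul] at hsum4
    rw [hsum1.unique hsum4, hLapp]
  -- ## Clause 1
  have c1 : ∀ t : ℝ, 0 < t →
      ({T : H →L[ℂ] H | ∀ x ∈ (M : Set (H →L[ℂ] H)), α t x * T = T * x} ∩
        {T : H →L[ℂ] H | ∀ y ∈ Set.centralizer (M : Set (H →L[ℂ] H)),
          j (α t (j y)) * T = T * y})
      = {T : H →L[ℂ] H | ∀ x : H →L[ℂ] H, β t x * T = T * x} := by
    intro t ht
    ext T
    simp only [Set.mem_inter_iff, Set.mem_setOf_eq]
    constructor
    · rintro ⟨h1, h2⟩ x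
      obtain ⟨hb1, hb2⟩ := toB t ht.le T h1 h2
      have key' := key t ht.le T hb1 hb2
      ext ξ
      simp only [ContinuousLinearMap.mul_apply]
      rw [key' ξ, key' (x ξ),
        ← ContinuousLinearMap.mul_apply (β t x) (β t (rankOne ξ Ω)) (T Ω),
        ← Bmul t ht.le, mul_rankOne]
    · intro h
      constructor
      · intro x hx
        rw [← A1 t ht.le x hx]
        exact h x
      · intro y hy
        rw [← A2 t ht.le y hy]
        exact h y
  -- ## Clause 2
  have c2 : ∀ t : ℝ, 0 < t → ∀ T : H →L[ℂ] H,
      (∀ x ∈ (M : Set (H →L[ℂ] H)), α t x * T = T * x) →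
      (∀ y ∈ Set.centralizer (M : Set (H →L[ℂ] H)), j (α t (j y)) * T = T * y) →
      ∀ S : H →L[ℂ] H,
      (∀ x ∈ (M : Set (H →L[ℂ] H)), α t x * S = S * x) →
      (∀ y ∈ Set.centralizer (M : Set (H →L[ℂ] H)), j (α t (j y)) * S = S * y) →
      ∃ c : ℂ, star T * S = c • 1 := by
    intro t ht T hT1 hT2 S hS1 hS2
    obtain ⟨hTb1, hTb2⟩ := toB t ht.le T hT1 hT2
    obtain ⟨hSb1, hSb2⟩ := toB t ht.le S hS1 hS2
    refine ⟨⟪β t (rankOne Ω Ω) (T Ω), S Ω⟫_ℂ, ?_⟩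
    ext ξ
    rw [ContinuousLinearMap.mul_apply, key t ht.le S hSb1 hSb2 ξ,
      Rscalar t ht.le T hTb1 hTb2 (S Ω) ξ,
      ContinuousLinearMap.smul_apply, ContinuousLinearMap.one_apply]
  -- ## Clause 3
  have c3 : ∀ s t : ℝ, 0 < s → 0 < t → ∀ T : H →L[ℂ] H,
      (∀ x ∈ (M : Set (H →L[ℂ] H)), α t x * T = T * x) →
      (∀ y ∈ Set.centralizer (M : Set (H →L[ℂ] H)), j (α t (j y)) * T = T * y) →
      ∀ S : H →L[ℂ] H,
      (∀ x ∈ (M : Set (H →L[ℂ] H)), α s x * S = S * x) →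
      (∀ y ∈ Set.centralizer (M : Set (H →L[ℂ] H)), j (α s (j y)) * S = S * y) →
      (∀ x ∈ (M : Set (H →L[ℂ] H)), α (s + t) x * (T * S) = (T * S) * x) ∧
      (∀ y ∈ Set.centralizer (M : Set (H →L[ℂ] H)),
        j (α (s + t) (j y)) * (T * S) = (T * S) * y) := by
    intro s t hs ht T hT1 hT2 S hS1 hS2
    constructor
    · intro x hx
      have hmem : α s x ∈ (M : Set (H →L[ℂ] H)) := hα.mapsTo s hs.le hx
      have hst : α (s + t) x = α t (α s x) := by
        rw [hα.semigroup t s ht.le hs.le x hx, add_comm]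
      rw [hst]
      calc α t (α s x) * (T * S) = (α t (α s x) * T) * S := (mul_assoc _ _ _).symm
        _ = (T * α s x) * S := by rw [hT1 _ hmem]
        _ = T * (α s x * S) := mul_assoc _ _ _
        _ = T * (S * x) := by rw [hS1 x hx]
        _ = (T * S) * x := (mul_assoc _ _ _).symm
    · intro y hy
      have hjy : j y ∈ (M : Set (H →L[ℂ] H)) := j_mem_M y hy
      have hmem : α s (j y) ∈ (M : Set (H →L[ℂ] H)) := hα.mapsTo s hs.le hjy
      have hy1 : j (α s (j y)) ∈ Set.centralizer (M : Set (H →L[ℂ] H)) :=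
        hSF.jmapsTo _ hmem
      have hst : α (s + t) (j y) = α t (α s (j y)) := by
        rw [hα.semigroup t s ht.le hs.le _ hjy, add_comm]
      have h2 : j (α (s + t) (j y)) = j (α t (j (j (α s (j y))))) := by
        rw [jj, ← hst]
      rw [h2]
      calc j (α t (j (j (α s (j y))))) * (T * S)
          = (j (α t (j (j (α s (j y))))) * T) * S := (mul_assoc _ _ _).symm
        _ = (T * j (α s (j y))) * S := by rw [hT2 _ hy1]
        _ = T * (j (α s (j y)) * S) := mul_assoc _ _ _
        _ = T * (S * y) := by rw [hS2 y hy]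
        _ = (T * S) * y := (mul_assoc _ _ _).symm
  -- canonical operators intertwine
  have LopMem : ∀ r : ℝ, 0 ≤ r → ∀ (χ : H) (L : H →L[ℂ] H),
      (∀ γ : H, L γ = β r (rankOne γ Ω) χ) →
      (∀ x ∈ (M : Set (H →L[ℂ] H)), α r x * L = L * x) ∧
      (∀ y ∈ Set.centralizer (M : Set (H →L[ℂ] H)), j (α r (j y)) * L = L * y) := by
    intro r hr χ L hL
    constructor
    · intro x hx
      ext ξ
      simp only [ContinuousLinearMap.mul_apply]
      rw [hL, hL, ← A1 r hr x hx,
        ← ContinuousLinearMap.mul_apply (β r x) (β r (rankOne ξ Ω)) χ, ← Bmul r hr, mul_rankOne]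
    · intro y hy
      ext ξ
      simp only [ContinuousLinearMap.mul_apply]
      rw [hL, hL, ← A2 r hr y hy,
        ← ContinuousLinearMap.mul_apply (β r y) (β r (rankOne ξ Ω)) χ, ← Bmul r hr, mul_rankOne]
  -- the operator norm of an intertwiner is attained at Ω
  have normV : ∀ r : ℝ, 0 ≤ r → ∀ V : H →L[ℂ] H,
      (∀ x ∈ (M : Set (H →L[ℂ] H)), β r x * V = V * x) →
      (∀ y ∈ Set.centralizer (M : Set (H →L[ℂ] H)), β r y * V = V * y) →
      ‖V‖ = ‖V Ω‖ := by
    intro r hr V h1 h2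
    have hkeyV := key r hr V h1 h2
    have hfix : β r (rankOne Ω Ω) (V Ω) = V Ω := (hkeyV Ω).symm
    have hVV : star V * V = ((‖V Ω‖ ^ 2 : ℝ) : ℂ) • 1 := by
      ext ξ
      rw [ContinuousLinearMap.mul_apply, hkeyV ξ, Rscalar r hr V h1 h2 (V Ω) ξ, hfix,
        ContinuousLinearMap.smul_apply, ContinuousLinearMap.one_apply, Csq]
    have hn := CStarRing.norm_star_mul_self (x := V)
    rw [hVV, norm_smul, ContinuousLinearMap.one_def, ContinuousLinearMap.norm_id, mul_one] at hn
    have hnc : ‖((‖V Ω‖ ^ 2 : ℝ) : ℂ)‖ = ‖V Ω‖ * ‖V Ω‖ := by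
      rw [Complex.norm_real, Real.norm_eq_abs, abs_of_nonneg (sq_nonneg _), pow_two]
    refine sq_eq _ _ (norm_nonneg V) (norm_nonneg (V Ω)) ?_
    rw [← hn, hnc]
  -- ## Clause 4
  have c4 : ∀ s t : ℝ, 0 < s → 0 < t →
      ({W : H →L[ℂ] H | ∀ x ∈ (M : Set (H →L[ℂ] H)), α (s + t) x * W = W * x} ∩
        {W : H →L[ℂ] H | ∀ y ∈ Set.centralizer (M : Set (H →L[ℂ] H)),
          j (α (s + t) (j y)) * W = W * y}) ⊆
      closure (Submodule.span ℂ
        {W : H →L[ℂ] H |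
          ∃ T ∈ ({T : H →L[ℂ] H | ∀ x ∈ (M : Set (H →L[ℂ] H)), α t x * T = T * x} ∩
            {T : H →L[ℂ] H | ∀ y ∈ Set.centralizer (M : Set (H →L[ℂ] H)),
              j (α t (j y)) * T = T * y}),
          ∃ S ∈ ({S : H →L[ℂ] H | ∀ x ∈ (M : Set (H →L[ℂ] H)), α s x * S = S * x} ∩
            {S : H →L[ℂ] H | ∀ y ∈ Set.centralizer (M : Set (H →L[ℂ] H)),
              j (α s (j y)) * S = S * y}), T * S = W} : Set (H →L[ℂ] H)) := by
    intro s t hs ht W hW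
    rw [Set.mem_inter_iff, Set.mem_setOf_eq, Set.mem_setOf_eq] at hW
    obtain ⟨hW1, hW2⟩ := hW
    have hst0 : (0:ℝ) ≤ s + t := by positivity
    obtain ⟨hWb1, hWb2⟩ := toB (s + t) hst0 W hW1 hW2
    have keyW := key (s + t) hst0 W hWb1 hWb2
    set P : H →L[ℂ] H := β s (rankOne Ω Ω) with hP
    have hPsa : star P = P := by rw [hP, ← Bstar s hs.le, star_rankOne]
    have hPid : P * P = P := by rw [hP, ← Bmul s hs.le, rankOne_mul_rankOne, hΩ1, one_smul]
    let K : Submodule ℂ H := LinearMap.range (P.toLinearMap)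
    have hKmem' : ∀ ξ : H, ξ ∈ K ↔ P ξ = ξ := by
      intro ξ
      rw [LinearMap.mem_range]
      constructor
      · rintro ⟨η, rfl⟩
        show P (P η) = P η
        rw [← ContinuousLinearMap.mul_apply, hPid]
      · intro h
        exact ⟨ξ, h⟩
    have hKclosed : IsClosed (K : Set H) := by
      have he : (K : Set H) = {ξ : H | P ξ = ξ} := Set.ext fun ξ => hKmem' ξ
      rw [he]
      exact isClosed_eq P.continuous continuous_id
    haveI : CompleteSpace K := hKclosed.completeSpace_coe
    obtain ⟨w', b', hb'coe⟩ := exists_hilbertBasis ℂ K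
    have hPg : ∀ k : w', P ((b' k : K) : H) = ((b' k : K) : H) :=
      fun k => (hKmem' _).mp (b' k).2
    have borth' : ∀ k l : w', k ≠ l → ⟪((b' k : K) : H), ((b' l : K) : H)⟫_ℂ = 0 := by
      intro k l hkl
      exact b'.orthonormal.2 hkl
    have bnorm' : ∀ k : w', ⟪((b' k : K) : H), ((b' k : K) : H)⟫_ℂ = 1 := by
      intro k
      have h1 := b'.orthonormal.1 k
      rw [Csq, show ‖((b' k : K) : H)‖ = ‖b' k‖ from rfl, h1]
      norm_num
    have hKsum : ∀ ζ : H,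
        HasSum (fun k : w' => rankOne ((b' k : K) : H) ((b' k : K) : H) ζ) (P ζ) := by
      intro ζ
      have hPζ : P ζ ∈ K := LinearMap.mem_range.mpr ⟨ζ, rfl⟩
      have h1 := b'.hasSum_repr (⟨P ζ, hPζ⟩ : K)
      have h2 := h1.mapL K.subtypeL
      simp only [map_smul, Submodule.subtypeL_apply] at h2
      have hco : ∀ k : w', (b'.repr (⟨P ζ, hPζ⟩ : K) k) = ⟪((b' k : K) : H), ζ⟫_ℂ := by
        intro k
        rw [b'.repr_apply_apply, Submodule.coe_inner]
        calc ⟪((b' k : K) : H), P ζ⟫_ℂ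
            = ⟪ContinuousLinearMap.adjoint P ((b' k : K) : H), ζ⟫_ℂ :=
              (ContinuousLinearMap.adjoint_inner_left P ζ _).symm
          _ = ⟪((b' k : K) : H), ζ⟫_ℂ := by
              rw [← ContinuousLinearMap.star_eq_adjoint, hPsa, hPg]
      have h3 : (fun k : w' => rankOne ((b' k : K) : H) ((b' k : K) : H) ζ)
          = fun k : w' => b'.repr (⟨P ζ, hPζ⟩ : K) k • ((b' k : K) : H) := by
        funext k
        rw [rankOne_apply, hco k]
      rw [h3]
      exact h2
    have hBsum2 : ∀ ζ : H, HasSum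
        (fun k : w' => β t (rankOne ((b' k : K) : H) ((b' k : K) : H)) ζ) (β t P ζ) :=
      fun ζ => hβ.normal t ht.le _ P (fun _ => Set.mem_univ _) (Set.mem_univ _)
        (fun k => ⟨star_rankOne _ _, by rw [rankOne_mul_rankOne, bnorm' k, one_smul]⟩)
        (fun k l hkl => by rw [rankOne_mul_rankOne, borth' k l hkl, zero_smul])
        hKsum ζ
    have hsg : β t P = β (s + t) (rankOne Ω Ω) := by
      rw [hP, hβ.semigroup t s ht.le hs.le (rankOne Ω Ω) (Set.mem_univ _), add_comm t s]
    have hWfix : β (s + t) (rankOne Ω Ω) (W Ω) = W Ω := (keyW Ω).symm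
    have hsumW : HasSum
        (fun k : w' => β t (rankOne ((b' k : K) : H) ((b' k : K) : H)) (W Ω)) (W Ω) := by
      have h := hBsum2 (W Ω)
      rwa [hsg, hWfix] at h
    -- the product operators
    choose Sop hSop using fun k : w' => Lop s hs.le ((b' k : K) : H)
    choose Top hTop using fun k : w' =>
      Lop t ht.le (β t (rankOne Ω ((b' k : K) : H)) (W Ω))
    have memS := fun k : w' => LopMem s hs.le _ _ (hSop k)
    have memT := fun k : w' => LopMem t ht.le _ _ (hTop k)
    have SopΩ : ∀ k : w', Sop k Ω = ((b' k : K) : H) := by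
      intro k
      rw [hSop k Ω, ← hP]
      exact hPg k
    have prodΩ : ∀ k : w', (Top k * Sop k) Ω
        = β t (rankOne ((b' k : K) : H) ((b' k : K) : H)) (W Ω) := by
      intro k
      rw [ContinuousLinearMap.mul_apply, SopΩ k, hTop k,
        ← ContinuousLinearMap.mul_apply (β t (rankOne ((b' k : K) : H) Ω))
          (β t (rankOne Ω ((b' k : K) : H))) (W Ω),
        ← Bmul t ht.le, rankOne_mul_rankOne, hΩ1, one_smul]
    have hTS_mem : ∀ k : w',
        (∀ x ∈ (M : Set (H →L[ℂ] H)), β (s + t) x * (Top k * Sop k) = (Top k * Sop k) * x) ∧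
        (∀ y ∈ Set.centralizer (M : Set (H →L[ℂ] H)),
          β (s + t) y * (Top k * Sop k) = (Top k * Sop k) * y) := by
      intro k
      have h := c3 s t hs ht (Top k) (memT k).1 (memT k).2 (Sop k) (memS k).1 (memS k).2
      exact toB (s + t) hst0 _ h.1 h.2
    have hdiff : ∀ F : Finset w',
        (∀ x ∈ (M : Set (H →L[ℂ] H)),
          β (s + t) x * ((∑ k ∈ F, Top k * Sop k) - W)
            = ((∑ k ∈ F, Top k * Sop k) - W) * x) ∧
        (∀ y ∈ Set.centralizer (M : Set (H →L[ℂ] H)),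
          β (s + t) y * ((∑ k ∈ F, Top k * Sop k) - W)
            = ((∑ k ∈ F, Top k * Sop k) - W) * y) := by
      intro F
      constructor
      · intro x hx
        rw [mul_sub, sub_mul, Finset.mul_sum, Finset.sum_mul]
        congr 1
        · exact Finset.sum_congr rfl fun k _ => (hTS_mem k).1 x hx
        · exact hWb1 x hx
      · intro y hy
        rw [mul_sub, sub_mul, Finset.mul_sum, Finset.sum_mul]
        congr 1
        · exact Finset.sum_congr rfl fun k _ => (hTS_mem k).2 y hy
        · exact hWb2 y hy
    have hnormF : ∀ F : Finset w',
        ‖(∑ k ∈ F, Top k * Sop k) - W‖ = ‖(∑ k ∈ F, (Top k * Sop k) Ω) - W Ω‖ := by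
      intro F
      rw [normV (s + t) hst0 _ (hdiff F).1 (hdiff F).2]
      congr 1
      rw [ContinuousLinearMap.sub_apply, ContinuousLinearMap.sum_apply]
    have htend0 : Filter.Tendsto (fun F : Finset w' => ∑ k ∈ F, (Top k * Sop k) Ω)
        Filter.atTop (nhds (W Ω)) := by
      have h := hsumW
      have heq : (fun k : w' => β t (rankOne ((b' k : K) : H) ((b' k : K) : H)) (W Ω))
          = fun k : w' => (Top k * Sop k) Ω := by
        funext k
        rw [prodΩ k]
      rw [heq] at h
      exact h
    have htend : Filter.Tendsto (fun F : Finset w' => ∑ k ∈ F, Top k * Sop k)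
        Filter.atTop (nhds W) := by
      rw [tendsto_iff_norm_sub_tendsto_zero]
      have h2 : Filter.Tendsto
          (fun F : Finset w' => ‖(∑ k ∈ F, (Top k * Sop k) Ω) - W Ω‖)
          Filter.atTop (nhds 0) := by
        have h3 := htend0.sub (tendsto_const_nhds (x := W Ω))
        simpa using h3.norm
      simpa only [hnormF] using h2
    refine mem_closure_of_tendsto htend (Filter.Eventually.of_forall fun F => ?_)
    refine Submodule.sum_mem _ fun k _ => Submodule.subset_span ?_
    exact ⟨Top k, ⟨(memT k).1, (memT k).2⟩, Sop k, ⟨(memS k).1, (memS k).2⟩, rfl⟩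
  -- ## Assembling the four clauses
  refine ⟨c1, ?_, ?_, c4⟩
  · intro t ht T hT S hS
    exact c2 t ht T ((Set.mem_inter_iff _ _ _).mp hT).1 ((Set.mem_inter_iff _ _ _).mp hT).2
      S ((Set.mem_inter_iff _ _ _).mp hS).1 ((Set.mem_inter_iff _ _ _).mp hS).2
  · intro s t hs ht T hT S hS
    have h := c3 s t hs ht T ((Set.mem_inter_iff _ _ _).mp hT).1
      ((Set.mem_inter_iff _ _ _).mp hT).2 S ((Set.mem_inter_iff _ _ _).mp hS).1
      ((Set.mem_inter_iff _ _ _).mp hS).2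
    exact Set.mem_inter h.1 h.2

end Paper
end
end
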